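/- arXiv:2309.12473 — 6 statements merged into one kernel-verified Lean document; each statement's English description precedes it below -/
import Mathlib

section
/- Every two longest paths in a finite connected graph share at least one vertex. -/
/-!
Suppose two longest paths `p` and `q` were disjoint. By connectivity there is a path `s` of
positive length from some `a` on `p` to some `b` on `q` meeting `p` only at `a` and `q` only at
`b`. The longer of the two pieces into which `a` cuts `p`, followed by `s`, followed by the longer
piece of `q` at `b`, is a path of length at least `|p| / 2 + 1 + |q| / 2 > |p|`.
-/

open SimpleGraph

namespace SimpleGraph

variable {V : Type*} {G : SimpleGraph V}

namespace Walk

lemma IsPath.append {a b c : V} {p : G.Walk a b} {q : G.Walk b c}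
    (hp : p.IsPath) (hq : q.IsPath) (h : ∀ z ∈ p.support, z ∈ q.support → z = b) :
    (p.append q).IsPath := by
  rw [isPath_def, support_append]
  have hnd : (b :: q.support.tail).Nodup := q.cons_tail_support ▸ hq.support_nodup
  refine hp.support_nodup.append hnd.of_cons fun z hz hz' => ?_
  obtain rfl : z = b := h z hz (List.mem_of_mem_tail hz')
  exact hnd.notMem hz'

lemma exists_prefix_meeting_set_only_at_end {S : Set V} {c d : V} (r : G.Walk c d)
    (hd : d ∈ S) :
    ∃ b ∈ S, ∃ s : G.Walk c b, s.support ⊆ r.support ∧ ∀ z ∈ s.support, z ∈ S → z = b := by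
  induction r with
  | nil => exact ⟨_, hd, nil, by simp, by simp⟩
  | @cons a _ _ h r ih =>
    by_cases ha : a ∈ S
    · exact ⟨a, ha, nil, by simp, by simp⟩
    · obtain ⟨b, hb, s, hsub, honly⟩ := ih hd
      refine ⟨b, hb, cons h s, List.cons_subset_cons _ hsub, ?_⟩
      rintro z hz hzS
      rcases List.mem_cons.mp hz with rfl | hz
      · exact absurd hzS ha
      · exact honly z hz hzS

lemma IsPath.exists_long_subpath_ending_at [DecidableEq V] {u v a : V} {p : G.Walk u v}
    (hp : p.IsPath) (ha : a ∈ p.support) :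
    ∃ w, ∃ A : G.Walk w a, A.IsPath ∧ A.support ⊆ p.support ∧ p.length ≤ 2 * A.length := by
  have hsplit : (p.takeUntil a ha).length + (p.dropUntil a ha).length = p.length := by
    rw [← length_append, take_spec]
  rcases le_total (p.takeUntil a ha).length (p.dropUntil a ha).length with h | h
  · refine ⟨v, (p.dropUntil a ha).reverse, (hp.dropUntil ha).reverse, ?_, ?_⟩
    · simpa [support_reverse] using p.support_dropUntil_subset_support ha
    · rw [length_reverse]; omega
  · exact ⟨u, p.takeUntil a ha, hp.takeUntil ha, p.support_takeUntil_subset_support ha, by omega⟩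

end Walk

lemma Connected.exists_isPath_meeting_only_at_ends (hG : G.Connected) {S T : Set V}
    (hS : S.Nonempty) (hT : T.Nonempty) :
    ∃ a ∈ S, ∃ b ∈ T, ∃ s : G.Walk a b, s.IsPath ∧
      (∀ z ∈ s.support, z ∈ S → z = a) ∧ ∀ z ∈ s.support, z ∈ T → z = b := by
  classical
  obtain ⟨u, hu⟩ := hS
  obtain ⟨x, hx⟩ := hT
  obtain ⟨r⟩ := hG.preconnected u x
  obtain ⟨b, hb, s₁, -, hs₁T⟩ := r.exists_prefix_meeting_set_only_at_end hx
  obtain ⟨a, ha, s₂, hs₂, hs₂S⟩ := s₁.reverse.exists_prefix_meeting_set_only_at_end hu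
  have hsub : s₂.reverse.bypass.support ⊆ s₂.support := fun z hz => by
    simpa using s₂.reverse.support_bypass_subset_support hz
  refine ⟨a, ha, b, hb, s₂.reverse.bypass, Walk.bypass_isPath _,
    fun z hz => hs₂S z (hsub hz), fun z hz => hs₁T z ?_⟩
  simpa using hs₂ (hsub hz)

end SimpleGraph

theorem stmt_0_general {V : Type*} (G : SimpleGraph V) (hG : G.Connected)
    {u v x y : V} (p : G.Walk u v) (q : G.Walk x y) (hp : p.IsPath) (hq : q.IsPath)
    (hpmax : ∀ {a b : V} (r : G.Walk a b), r.IsPath → r.length ≤ p.length)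
    (hqmax : ∀ {a b : V} (r : G.Walk a b), r.IsPath → r.length ≤ q.length) :
    ∃ z, z ∈ p.support ∧ z ∈ q.support := by
  classical
  by_contra! hdisj
  obtain ⟨a, ha, b, hb, s, hs, hsp, hsq⟩ := hG.exists_isPath_meeting_only_at_ends
    (S := {z | z ∈ p.support}) (T := {z | z ∈ q.support})
    ⟨u, p.start_mem_support⟩ ⟨x, q.start_mem_support⟩
  have hs_pos : s.length ≠ 0 := fun h => hdisj a ha (Walk.eq_of_length_eq_zero h ▸ hb)
  obtain ⟨w, A, hA, hAp, hAlen⟩ := hp.exists_long_subpath_ending_at ha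
  obtain ⟨z, B, hB, hBq, hBlen⟩ := hq.exists_long_subpath_ending_at hb
  have hsB : (s.append B.reverse).IsPath :=
    hs.append hB.reverse fun c hc hcB => hsq c hc (hBq (by simpa using hcB))
  have hAsB : (A.append (s.append B.reverse)).IsPath := by
    refine hA.append hsB fun c hcA hc => ?_
    rcases (Walk.mem_support_append_iff _ _).mp hc with hcs | hcB
    · exact hsp c hcs (hAp hcA)
    · exact absurd (hBq (by simpa using hcB)) (hdisj c (hAp hcA))
  have hlong := hpmax _ hAsB
  have hpq := hqmax p hp
  simp only [Walk.length_append, Walk.length_reverse] at hlong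
  omega

/-- Every two longest paths in a finite connected graph share at least one vertex. -/
theorem stmt_0 {V : Type*} [Fintype V] (G : SimpleGraph V) (hG : G.Connected)
    {u v x y : V} (p : G.Walk u v) (q : G.Walk x y) (hp : p.IsPath) (hq : q.IsPath)
    (hpmax : ∀ {a b : V} (r : G.Walk a b), r.IsPath → r.length ≤ p.length)
    (hqmax : ∀ {a b : V} (r : G.Walk a b), r.IsPath → r.length ≤ q.length) :
    ∃ z, z ∈ p.support ∧ z ∈ q.support :=
  stmt_0_general G hG p q hp hq hpmax hqmax
end

section
/- Let G, H be graphs and k ∈ ℕ with H k-connected and H a minor of G. Let (T, 𝒱) be a tree-decomposition of G of adhesion less than k such that every adhesion set induces a complete subgraph of G. Then there exists a node t ∈ V(T) such that H is a minor of the induced subgraph G[V_t]. -/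
open SimpleGraph

/-- `G` contains a path with `n` edges. -/
def HasPathLen {V : Type*} (G : SimpleGraph V) (n : ℕ) : Prop :=
  ∃ (u v : V) (p : G.Walk u v), p.IsPath ∧ p.length = n

/-- `B` is a model of `H` inside `G`. -/
def IsModelOf {V W : Type*} (G : SimpleGraph V) (H : SimpleGraph W) (B : W → Set V) : Prop :=
  (∀ w, (B w).Nonempty) ∧ (∀ w, (G.induce (B w)).Connected) ∧
  (Pairwise fun w w' => Disjoint (B w) (B w')) ∧
  (∀ ⦃w w'⦄, H.Adj w w' → ∃ u ∈ B w, ∃ v ∈ B w', G.Adj u v)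

/-- `H` is a minor of `G`. -/
def IsMinorOf {V W : Type*} (H : SimpleGraph W) (G : SimpleGraph V) : Prop :=
  ∃ B : W → Set V, IsModelOf G H B

/-- `(Tr, 𝒱)` is a tree-decomposition of `G`. -/
structure IsTreeDecomp {V T : Type*} (G : SimpleGraph V) (Tr : SimpleGraph T)
    (𝒱 : T → Set V) : Prop where
  tree : Tr.IsTree
  coverV : ∀ v, ∃ t, v ∈ 𝒱 t
  coverE : ∀ ⦃u v⦄, G.Adj u v → ∃ t, u ∈ 𝒱 t ∧ v ∈ 𝒱 t
  sep : ∀ ⦃x z : T⦄ (p : Tr.Walk x z), p.IsPath → ∀ y ∈ p.support, 𝒱 x ∩ 𝒱 z ⊆ 𝒱 y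

/-- `G` is `k`-connected. -/
def KConnected {V : Type*} (G : SimpleGraph V) (k : ℕ) : Prop :=
  (k < Nat.card V ∨ Infinite V) ∧
  ∀ s : Set V, s.Finite → s.ncard < k → (G.induce sᶜ).Connected


/-!
Fix a model `B` of `H` in `G`. For a tree edge `tu`, fewer than `k` branch sets meet the adhesion
set `V_t ∩ V_u`, so by `k`-connectivity the others span a connected subgraph of `H`; hence they
all lie on the same side of the separation of `G` defined by `tu`, and we orient `tu` towards that
side. A walk in `T` that follows the orientation and never turns back would leave behind, one
after the other, the finitely many bags containing vertices of `k` fixed branch sets, while each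
of its edges must still point towards one of them; so some node `t` has all its edges oriented
towards it. Then every branch set meets `V_t`, and since adhesion sets are cliques, every walk
between two vertices of `V_t` can be rerouted inside `V_t` without leaving the connected set it
runs in. Intersecting the branch sets with `V_t` therefore gives a model of `H` in `G[V_t]`.
-/

open Set

namespace SimpleGraph

variable {V : Type*} {G : SimpleGraph V}

theorem Preconnected.induce_induction {s : Set V} (hs : (G.induce s).Preconnected)
    {P : V → Prop} (hP : ∀ ⦃a b⦄, a ∈ s → b ∈ s → G.Adj a b → P a → P b)
    {a b : V} (ha : a ∈ s) (hb : b ∈ s) (h : P a) : P b := by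
  suffices ∀ y : s, (G.induce s).Reachable ⟨a, ha⟩ y → P y from this ⟨b, hb⟩ (hs _ _)
  intro y hy
  obtain hr := (reachable_iff_reflTransGen _ _).1 hy
  clear hy
  induction hr with
  | refl => exact h
  | @tail x y _ hxy ih => exact hP x.2 y.2 hxy ih

theorem Preconnected.exists_walk_of_induce {s : Set V} (hs : (G.induce s).Preconnected)
    {x y : V} (hx : x ∈ s) (hy : y ∈ s) : ∃ p : G.Walk x y, ∀ z ∈ p.support, z ∈ s := by
  obtain ⟨p⟩ := hs ⟨x, hx⟩ ⟨y, hy⟩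
  have hp : ∀ z ∈ (p.map (Embedding.induce s).toHom).support, z ∈ s := by
    simp only [Walk.support_map, List.mem_map]
    rintro _ ⟨z, -, rfl⟩
    exact z.2
  exact ⟨_, hp⟩

theorem Preconnected.exists_adj_of_induce_union {P Q : Set V}
    (hs : (G.induce (P ∪ Q)).Preconnected) (hPQ : Disjoint P Q) {x y : V} (hx : x ∈ P)
    (hy : y ∈ Q) : ∃ a ∈ P, ∃ b ∈ Q, G.Adj a b := by
  by_contra! h
  have hyP : y ∈ P := hs.induce_induction (P := (· ∈ P))
    (fun a b _ hb hab ha => hb.resolve_right fun hbQ => h a ha b hbQ hab)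
    (Or.inl hx) (Or.inr hy) hx
  exact Set.disjoint_left.1 hPQ hyP hy

structure IsSeparation (G : SimpleGraph V) (X Y : Set V) : Prop where
  union_eq_univ : X ∪ Y = univ
  not_adj : ∀ ⦃x y⦄, x ∈ X \ Y → y ∈ Y \ X → ¬G.Adj x y

namespace IsSeparation

variable {X Y S : Set V}

theorem symm (h : G.IsSeparation X Y) : G.IsSeparation Y X :=
  ⟨by rw [union_comm]; exact h.union_eq_univ, fun _ _ hx hy hxy => h.not_adj hy hx hxy.symm⟩

theorem mem_union (h : G.IsSeparation X Y) (x : V) : x ∈ X ∪ Y :=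
  h.union_eq_univ ▸ mem_univ x

theorem mem_left_of_adj (h : G.IsSeparation X Y) {x y : V} (hx : x ∈ X \ Y) (hxy : G.Adj x y) :
    y ∈ X := by
  by_contra hy
  exact h.not_adj hx ⟨(h.mem_union y).resolve_left hy, hy⟩ hxy

theorem subset_left_of_preconnected (h : G.IsSeparation X Y) (hS : X ∩ Y ⊆ S) {C : Set V}
    (hC : (G.induce C).Preconnected) (hCS : Disjoint C S) {c : V} (hc : c ∈ C) (hcX : c ∈ X) :
    C ⊆ X := fun _ hy =>
  hC.induce_induction (fun _ _ ha _ hab haX =>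
    h.mem_left_of_adj ⟨haX, fun haY => Set.disjoint_left.1 hCS ha (hS ⟨haX, haY⟩)⟩ hab) hc hy hcX

theorem subset_or_subset_of_connected (h : G.IsSeparation X Y) (hS : X ∩ Y ⊆ S) {C : Set V}
    (hC : (G.induce C).Connected) (hCS : Disjoint C S) : C ⊆ X ∨ C ⊆ Y := by
  obtain ⟨⟨c, hc⟩⟩ := hC.nonempty
  rcases h.mem_union c with hcX | hcY
  · exact Or.inl (h.subset_left_of_preconnected hS hC.preconnected hCS hc hcX)
  · exact Or.inr (h.symm.subset_left_of_preconnected (by rwa [inter_comm]) hC.preconnected hCS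
      hc hcY)

theorem exists_walk_from_inter (h : G.IsSeparation X Y) {x y : V} (p : G.Walk x y) (hx : x ∉ X)
    (hy : y ∈ X) :
    ∃ x' ∈ X ∩ Y, ∃ q : G.Walk x' y, q.length < p.length ∧ q.support ⊆ p.support := by
  induction p with
  | nil => exact absurd hy hx
  | @cons x b y hxb r ih =>
    have hbY : b ∈ Y := h.symm.mem_left_of_adj ⟨(h.mem_union x).resolve_left hx, hx⟩ hxb
    by_cases hb : b ∈ X
    · exact ⟨b, ⟨hb, hbY⟩, r, by simp, by simp⟩
    · obtain ⟨x', hx', q, hlen, hsub⟩ := ih hb hy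
      exact ⟨x', hx', q, by simp; omega, fun z hz => List.mem_cons_of_mem _ (hsub hz)⟩

end IsSeparation

def IsCliqueSeparated (G : SimpleGraph V) (U : Set V) : Prop :=
  ∀ x ∉ U, ∃ X Y, G.IsSeparation X Y ∧ U ⊆ X ∧ X ∩ Y ⊆ U ∧ G.IsClique (X ∩ Y) ∧ x ∉ X

namespace IsCliqueSeparated

variable {U : Set V}

theorem exists_walk (hU : G.IsCliqueSeparated U) {C : Set V} {x y : V} (p : G.Walk x y)
    (hx : x ∈ U) (hy : y ∈ U) (hp : ∀ z ∈ p.support, z ∈ C) :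
    ∃ q : G.Walk x y, ∀ z ∈ q.support, z ∈ C ∩ U := by
  induction hn : p.length using Nat.strong_induction_on generalizing x with
  | _ n ih =>
  cases p with
  | nil => exact ⟨.nil, by simpa using ⟨hp _ (by simp), hx⟩⟩
  | @cons _ b _ hxb r =>
    have hrC : ∀ z ∈ r.support, z ∈ C := fun z hz => hp z (by simp [hz])
    have hrn : r.length < n := by simp [← hn]
    -- if the walk leaves `U` at `b`, it re-enters through the clique separating `b` from `U`,
    -- and that clique contains `x`
    obtain ⟨x', hx'U, r', hr'n, hr'C, hxx'⟩ : ∃ x' ∈ U, ∃ r' : G.Walk x' y, r'.length < n ∧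
        (∀ z ∈ r'.support, z ∈ C) ∧ (x = x' ∨ G.Adj x x') := by
      by_cases hb : b ∈ U
      · exact ⟨b, hb, r, hrn, hrC, Or.inr hxb⟩
      obtain ⟨X, Y, hs, hUX, hXY, hcl, hbX⟩ := hU b hb
      obtain ⟨x', hx', r', hr'len, hr'sub⟩ := hs.exists_walk_from_inter r hbX (hUX hy)
      have hxY : x ∈ Y :=
        hs.symm.mem_left_of_adj ⟨(hs.mem_union b).resolve_left hbX, hbX⟩ hxb.symm
      refine ⟨x', hXY hx', r', hr'len.trans hrn, fun z hz => hrC z (hr'sub hz), ?_⟩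
      by_cases hxx' : x = x'
      · exact Or.inl hxx'
      · exact Or.inr (hcl ⟨hUX hx, hxY⟩ hx' hxx')
    obtain ⟨q, hq⟩ := ih _ hr'n r' hx'U hr'C rfl
    rcases hxx' with rfl | hxx'
    · exact ⟨q, hq⟩
    · refine ⟨.cons hxx' q, ?_⟩
      simp only [Walk.support_cons, List.mem_cons, forall_eq_or_imp]
      exact ⟨⟨hp x (by simp), hx⟩, hq⟩

theorem connected_induce (hU : G.IsCliqueSeparated U) {C : Set V}
    (hC : (G.induce C).Connected) (hne : (C ∩ U).Nonempty) :
    ((G.induce U).induce (Subtype.val ⁻¹' C)).Connected := by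
  obtain ⟨c, hcC, hcU⟩ := hne
  rw [connected_iff_exists_forall_reachable]
  refine ⟨⟨⟨c, hcU⟩, hcC⟩, ?_⟩
  rintro ⟨⟨y, hyU⟩, hyC⟩
  obtain ⟨p, hp⟩ := hC.preconnected.exists_walk_of_induce hcC hyC
  obtain ⟨q, hq⟩ := hU.exists_walk p hcU hyU hp
  exact ⟨(q.induce U fun z hz => (hq z hz).2).induce _ (by simpa using fun z _ hz => (hq z hz).1)⟩

end IsCliqueSeparated

variable {T : Type*} {Tr : SimpleGraph T}

def edgeSide (Tr : SimpleGraph T) (t u : T) : Set T :=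
  {s | (Tr.deleteEdges {s(t, u)}).Reachable u s}

theorem mem_edgeSide_self (t u : T) : u ∈ Tr.edgeSide t u := Reachable.refl _

theorem mem_edgeSide_of_adj {t u x y : T} (hx : x ∈ Tr.edgeSide t u) (h : Tr.Adj x y)
    (he : s(x, y) ≠ s(t, u)) : y ∈ Tr.edgeSide t u :=
  Reachable.trans hx (deleteEdges_adj.2 ⟨h, by simpa using he⟩).reachable

theorem mem_edgeSide_or (hc : Tr.Preconnected) (t u s : T) :
    s ∈ Tr.edgeSide t u ∨ s ∈ Tr.edgeSide u t := by
  induction (reachable_iff_reflTransGen u s).1 (hc u s) with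
  | refl => exact Or.inl (mem_edgeSide_self t u)
  | @tail x y _ hxy ih =>
    by_cases he : s(x, y) = s(t, u)
    · rcases Sym2.eq_iff.1 he with ⟨-, rfl⟩ | ⟨-, rfl⟩
      · exact Or.inl (mem_edgeSide_self _ _)
      · exact Or.inr (mem_edgeSide_self _ _)
    · exact ih.imp (mem_edgeSide_of_adj · hxy he)
        (mem_edgeSide_of_adj · hxy (by rwa [Sym2.eq_swap (a := u)]))

theorem exists_adj_mem_edgeSide {t s : T} (h : Tr.Reachable t s) (hst : s ≠ t) :
    ∃ u, Tr.Adj t u ∧ s ∈ Tr.edgeSide t u := by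
  suffices s = t ∨ ∃ u, Tr.Adj t u ∧ s ∈ Tr.edgeSide t u from this.resolve_left hst
  have hr := (reachable_iff_reflTransGen t s).1 h
  clear h hst
  induction hr with
  | refl => exact Or.inl rfl
  | @tail x y _ hxy ih =>
    rcases ih with rfl | ⟨u, hu, hx⟩
    · exact Or.inr ⟨y, hxy, mem_edgeSide_self _ _⟩
    by_cases he : s(x, y) = s(t, u)
    · rcases Sym2.eq_iff.1 he with ⟨-, rfl⟩ | ⟨-, rfl⟩
      · exact Or.inr ⟨_, hu, mem_edgeSide_self _ _⟩
      · exact Or.inl rfl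
    · exact Or.inr ⟨u, hu, mem_edgeSide_of_adj hx hxy he⟩

theorem IsAcyclic.mem_edges_of_mem_edgeSide (hT : Tr.IsAcyclic) {t u a b : T} (h : Tr.Adj t u)
    (p : Tr.Walk a b) (ha : a ∈ Tr.edgeSide u t) (hb : b ∈ Tr.edgeSide t u) :
    s(t, u) ∈ p.edges := by
  by_contra he
  have ha' : (Tr.deleteEdges {s(t, u)}).Reachable t a := by rwa [Sym2.eq_swap]
  exact isBridge_iff.1 (isAcyclic_iff_forall_adj_isBridge.1 hT h)
    ((ha'.trans (p.toDeleteEdge _ he).reachable).trans hb.symm)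

theorem IsAcyclic.disjoint_edgeSide (hT : Tr.IsAcyclic) {t u : T} (h : Tr.Adj t u) :
    Disjoint (Tr.edgeSide t u) (Tr.edgeSide u t) :=
  Set.disjoint_left.2 fun s hs hs' => by
    simpa using hT.mem_edges_of_mem_edgeSide h (.nil : Tr.Walk s s) hs' hs

theorem IsAcyclic.notMem_edgeSide (hT : Tr.IsAcyclic) {t u : T} (h : Tr.Adj t u) :
    t ∉ Tr.edgeSide t u :=
  fun ht => Set.disjoint_left.1 (hT.disjoint_edgeSide h) ht (mem_edgeSide_self u t)

theorem IsAcyclic.mem_edgeSide_of_lt (hT : Tr.IsAcyclic) {a : ℕ → T}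
    (ha : ∀ n, Tr.Adj (a n) (a (n + 1))) (hnb : ∀ n, a (n + 2) ≠ a n) {i n : ℕ} (hin : i < n) :
    a n ∈ Tr.edgeSide (a i) (a (i + 1)) := by
  induction n generalizing i with
  | zero => omega
  | succ n ih =>
    rcases Nat.lt_succ_iff_lt_or_eq.1 hin with hin | rfl
    · refine mem_edgeSide_of_adj (ih hin) (ha n) fun he => ?_
      rcases Sym2.eq_iff.1 he with ⟨hni, -⟩ | ⟨hni, hn1⟩
      · exact hT.notMem_edgeSide (ha i) (hni ▸ ih hin)
      · rcases Nat.lt_or_ge (i + 1) n with hlt | hge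
        · exact hT.notMem_edgeSide (ha (i + 1)) (hni ▸ ih hlt)
        · obtain rfl : n = i + 1 := by omega
          exact hnb i hn1
    · exact mem_edgeSide_self _ _

theorem IsAcyclic.injective_of_nonbacktracking (hT : Tr.IsAcyclic) {a : ℕ → T}
    (ha : ∀ n, Tr.Adj (a n) (a (n + 1))) (hnb : ∀ n, a (n + 2) ≠ a n) : Function.Injective a := by
  intro m n hmn
  by_contra hne
  rcases Nat.lt_or_gt_of_ne hne with h | h
  · exact hT.notMem_edgeSide (ha m) (hmn ▸ hT.mem_edgeSide_of_lt ha hnb h)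
  · exact hT.notMem_edgeSide (ha n) (hmn ▸ hT.mem_edgeSide_of_lt ha hnb h)

theorem IsTree.finite_setOf_mem_edgeSide (hT : Tr.IsTree) {a : ℕ → T}
    (ha : ∀ n, Tr.Adj (a n) (a (n + 1))) (hinj : Function.Injective a) (s : T) :
    {n | s ∈ Tr.edgeSide (a n) (a (n + 1))}.Finite := by
  have hback : ∀ n, a 0 ∈ Tr.edgeSide (a (n + 1)) (a n) := by
    intro n
    suffices ∀ j ≤ n, (Tr.deleteEdges {s(a (n + 1), a n)}).Reachable (a 0) (a j) from
      (this n le_rfl).symm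
    intro j hj
    induction j with
    | zero => rfl
    | succ j ih =>
      refine (ih (by omega)).trans (deleteEdges_adj.2 ⟨ha j, ?_⟩).reachable
      simp only [mem_singleton_iff, Sym2.eq_iff, hinj.eq_iff]
      omega
  -- a fixed walk from `a 0` to `s` crosses every edge of the ray beyond which `s` lies
  obtain ⟨p⟩ := hT.connected.preconnected (a 0) s
  refine Finite.of_injOn (f := fun n => s(a n, a (n + 1))) (t := {e | e ∈ p.edges})
    (fun n hn => hT.isAcyclic.mem_edges_of_mem_edgeSide (ha n) p (hback n) hn)
    (fun m _ n _ hmn => ?_) p.edges.finite_toSet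
  simp only [Sym2.eq_iff, hinj.eq_iff] at hmn
  omega

theorem IsTree.exists_sink (hT : Tr.IsTree) {P : T → T → Prop}
    (htot : ∀ ⦃t u⦄, Tr.Adj t u → P t u ∨ P u t) {F : Set T} (hF : F.Finite)
    (hPF : ∀ ⦃t u⦄, Tr.Adj t u → P t u → (F ∩ Tr.edgeSide t u).Nonempty) :
    ∃ t, ∀ u, Tr.Adj t u → P u t := by
  by_contra! hno
  choose g hg hPg using hno
  obtain ⟨t₀⟩ := hT.connected.nonempty
  set a : ℕ → T := fun n => g^[n] t₀
  have hsucc : ∀ n, a (n + 1) = g (a n) := fun n => Function.iterate_succ_apply' g n t₀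
  have ha : ∀ n, Tr.Adj (a n) (a (n + 1)) := fun n => hsucc n ▸ hg (a n)
  have hback : ∀ n, ¬P (a (n + 1)) (a n) := fun n => hsucc n ▸ hPg (a n)
  have hfwd : ∀ n, P (a n) (a (n + 1)) := fun n => (htot (ha n)).resolve_right (hback n)
  have hnb : ∀ n, a (n + 2) ≠ a n := fun n h => hback n (h ▸ hfwd (n + 1))
  have hinj := hT.isAcyclic.injective_of_nonbacktracking ha hnb
  refine infinite_univ ((hF.biUnion fun s _ => hT.finite_setOf_mem_edgeSide ha hinj s).subset
    fun n _ => ?_)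
  obtain ⟨s, hsF, hs⟩ := hPF (ha n) (hfwd n)
  exact mem_biUnion hsF hs

end SimpleGraph

open SimpleGraph

variable {V W T : Type*} {G : SimpleGraph V} {H : SimpleGraph W} {B : W → Set V} {k : ℕ}

theorem KConnected.exists_finite_ncard_eq (hH : KConnected H k) :
    ∃ U : Set W, U.Finite ∧ U.ncard = k := by
  rcases hH.1 with hk | hinf
  · have : Finite W := Nat.finite_of_card_ne_zero (by omega)
    obtain ⟨U, -, hU⟩ := Set.exists_subset_card_eq (s := (univ : Set W)) (n := k)
      (by rw [ncard_univ]; omega)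
    exact ⟨U, toFinite U, hU⟩
  · obtain ⟨U, -, hU⟩ := (@infinite_univ W hinf).exists_subset_ncard_eq k
    exact ⟨U, hU⟩

theorem finite_ncard_setOf_not_disjoint (hB : Pairwise fun w w' => Disjoint (B w) (B w'))
    {S : Set V} (hS : S.Finite) :
    {w | ¬Disjoint (B w) S}.Finite ∧ {w | ¬Disjoint (B w) S}.ncard ≤ S.ncard := by
  set X := {w | ¬Disjoint (B w) S}
  have hX : ∀ w : X, ∃ v : S, v.1 ∈ B w := fun w => by
    obtain ⟨v, hvB, hvS⟩ := not_disjoint_iff.1 w.2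
    exact ⟨⟨v, hvS⟩, hvB⟩
  choose f hf using hX
  have hinj : Function.Injective f := fun w w' hww' => by
    by_contra hne
    have hw' := hf w'
    rw [← hww'] at hw'
    exact Set.disjoint_left.1 (hB (Subtype.coe_ne_coe.2 hne)) (hf w) hw'
  have := hS.to_subtype
  exact ⟨finite_coe_iff.1 (Finite.of_injective f hinj),
    by simpa [Nat.card_coe_set_eq] using Nat.card_le_card_of_injective f hinj⟩

namespace IsModelOf

theorem nonempty (hB : IsModelOf G H B) (w : W) : (B w).Nonempty := hB.1 w

theorem connected (hB : IsModelOf G H B) (w : W) : (G.induce (B w)).Connected := hB.2.1 w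

theorem disjoint (hB : IsModelOf G H B) {w w' : W} (h : w ≠ w') : Disjoint (B w) (B w') :=
  hB.2.2.1 h

theorem exists_adj (hB : IsModelOf G H B) {w w' : W} (h : H.Adj w w') :
    ∃ u ∈ B w, ∃ v ∈ B w', G.Adj u v :=
  hB.2.2.2 h

end IsModelOf

theorem SimpleGraph.IsSeparation.forall_subset_left {X Y S : Set V}
    (hs : G.IsSeparation X Y) (hS : X ∩ Y ⊆ S) (hB : IsModelOf G H B)
    (hc : (H.induce {w | Disjoint (B w) S}).Preconnected) {w₀ : W} (hw₀ : Disjoint (B w₀) S)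
    (h₀ : B w₀ ⊆ X) (w : W) (hw : Disjoint (B w) S) : B w ⊆ X :=
  hc.induce_induction (P := fun w => B w ⊆ X) (fun w₁ w₂ hw₁ hw₂ h₁₂ h₁ => by
      obtain ⟨x, hx, y, hy, hxy⟩ := hB.exists_adj h₁₂
      have hxX := h₁ hx
      exact hs.subset_left_of_preconnected hS (hB.connected w₂).preconnected hw₂ hy
        (hs.mem_left_of_adj ⟨hxX, fun hxY => Set.disjoint_left.1 hw₁ hx (hS ⟨hxX, hxY⟩)⟩ hxy))
    hw₀ hw h₀

theorem SimpleGraph.IsSeparation.forall_subset_or {X Y S : Set V}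
    (hs : G.IsSeparation X Y) (hS : X ∩ Y ⊆ S) (hB : IsModelOf G H B)
    (hc : (H.induce {w | Disjoint (B w) S}).Connected) :
    (∀ w, Disjoint (B w) S → B w ⊆ X) ∨ (∀ w, Disjoint (B w) S → B w ⊆ Y) := by
  obtain ⟨⟨w₀, hw₀⟩⟩ := hc.nonempty
  rcases hs.subset_or_subset_of_connected hS (hB.connected w₀) hw₀ with h₀ | h₀
  · exact Or.inl (hs.forall_subset_left hS hB hc.preconnected hw₀ h₀)
  · exact Or.inr (hs.symm.forall_subset_left (by rwa [inter_comm]) hB hc.preconnected hw₀ h₀)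

theorem IsModelOf.induce (hB : IsModelOf G H B) {U : Set V} (hU : G.IsCliqueSeparated U)
    (hmeet : ∀ w, (B w ∩ U).Nonempty) :
    IsModelOf (G.induce U) H (fun w => Subtype.val ⁻¹' B w) := by
  refine ⟨fun w => ?_, fun w => hU.connected_induce (hB.connected w) (hmeet w),
    fun w w' hne => (hB.disjoint hne).preimage _, fun w w' hww' => ?_⟩
  · obtain ⟨v, hvB, hvU⟩ := hmeet w
    exact ⟨⟨v, hvU⟩, hvB⟩
  · obtain ⟨u, hu, v, hv, huv⟩ := hB.exists_adj hww'
    obtain ⟨x, hxB, hxU⟩ := hmeet w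
    obtain ⟨y, hyB, hyU⟩ := hmeet w'
    have hC := hU.connected_induce (connected_induce_union (hB.connected w).preconnected
      (hB.connected w').preconnected hu hv huv) ⟨x, Or.inl hxB, hxU⟩
    rw [preimage_union] at hC
    exact hC.preconnected.exists_adj_of_induce_union ((hB.disjoint hww'.ne).preimage _)
      (x := ⟨x, hxU⟩) hxB (y := ⟨y, hyU⟩) hyB

variable {Tr : SimpleGraph T} {𝒱 : T → Set V}

def sideVerts (Tr : SimpleGraph T) (𝒱 : T → Set V) (t u : T) : Set V :=
  ⋃ s ∈ Tr.edgeSide t u, 𝒱 s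

theorem subset_sideVerts {s t u : T} (hs : s ∈ Tr.edgeSide t u) : 𝒱 s ⊆ sideVerts Tr 𝒱 t u :=
  subset_biUnion_of_mem (u := 𝒱) hs

def PointsTo (Tr : SimpleGraph T) (𝒱 : T → Set V) (B : W → Set V) (t u : T) : Prop :=
  ∀ w, Disjoint (B w) (𝒱 t ∩ 𝒱 u) → B w ⊆ sideVerts Tr 𝒱 t u

namespace IsTreeDecomp

theorem isSeparation (htd : IsTreeDecomp G Tr 𝒱) (t u : T) :
    G.IsSeparation (sideVerts Tr 𝒱 u t) (sideVerts Tr 𝒱 t u) where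
  union_eq_univ := eq_univ_of_forall fun x => by
    obtain ⟨s, hs⟩ := htd.coverV x
    exact (mem_edgeSide_or htd.tree.connected.preconnected u t s).imp
      (subset_sideVerts · hs) (subset_sideVerts · hs)
  not_adj x y hx hy hxy := by
    obtain ⟨s, hxs, hys⟩ := htd.coverE hxy
    rcases mem_edgeSide_or htd.tree.connected.preconnected u t s with h | h
    · exact hy.2 (subset_sideVerts h hys)
    · exact hx.2 (subset_sideVerts h hxs)

theorem sideVerts_inter_subset (htd : IsTreeDecomp G Tr 𝒱) {t u : T} (h : Tr.Adj t u) :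
    sideVerts Tr 𝒱 u t ∩ sideVerts Tr 𝒱 t u ⊆ 𝒱 t ∩ 𝒱 u := by
  classical
  rintro x ⟨hx, hx'⟩
  simp only [sideVerts, mem_iUnion₂] at hx hx'
  obtain ⟨a, ha, hxa⟩ := hx
  obtain ⟨b, hb, hxb⟩ := hx'
  obtain ⟨p⟩ := htd.tree.connected.preconnected a b
  have he := htd.tree.isAcyclic.mem_edges_of_mem_edgeSide h p.toPath ha hb
  exact ⟨htd.sep _ p.toPath.2 t (Walk.fst_mem_support_of_mem_edges _ he) ⟨hxa, hxb⟩,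
    htd.sep _ p.toPath.2 u (Walk.snd_mem_support_of_mem_edges _ he) ⟨hxa, hxb⟩⟩

theorem exists_adj_notMem_sideVerts (htd : IsTreeDecomp G Tr 𝒱) {t : T} {x : V}
    (hx : x ∉ 𝒱 t) : ∃ u, Tr.Adj t u ∧ x ∉ sideVerts Tr 𝒱 u t := by
  obtain ⟨s, hs⟩ := htd.coverV x
  obtain ⟨u, hu, hsu⟩ :=
    exists_adj_mem_edgeSide (htd.tree.connected.preconnected t s) (by rintro rfl; exact hx hs)
  exact ⟨u, hu, fun hx' => hx (htd.sideVerts_inter_subset hu ⟨hx', subset_sideVerts hsu hs⟩).1⟩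

theorem isCliqueSeparated (htd : IsTreeDecomp G Tr 𝒱) {t : T}
    (hcl : ∀ ⦃u⦄, Tr.Adj t u → G.IsClique (𝒱 t ∩ 𝒱 u)) : G.IsCliqueSeparated (𝒱 t) := by
  intro x hx
  obtain ⟨u, hu, hxu⟩ := htd.exists_adj_notMem_sideVerts hx
  have hS := htd.sideVerts_inter_subset hu
  exact ⟨_, _, htd.isSeparation t u, subset_sideVerts (mem_edgeSide_self u t),
    hS.trans inter_subset_left, (hcl hu).subset hS, hxu⟩

theorem pointsTo_or (htd : IsTreeDecomp G Tr 𝒱) (hB : IsModelOf G H B) (hH : KConnected H k)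
    {t u : T} (h : Tr.Adj t u) (hS : (𝒱 t ∩ 𝒱 u).Finite) (hSk : (𝒱 t ∩ 𝒱 u).ncard < k) :
    PointsTo Tr 𝒱 B t u ∨ PointsTo Tr 𝒱 B u t := by
  obtain ⟨hXfin, hXcard⟩ := finite_ncard_setOf_not_disjoint (fun _ _ => hB.disjoint) hS
  have hX : {w | ¬Disjoint (B w) (𝒱 t ∩ 𝒱 u)}ᶜ = {w | Disjoint (B w) (𝒱 t ∩ 𝒱 u)} := by
    ext
    simp
  have hc := hH.2 _ hXfin (hXcard.trans_lt hSk)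
  rw [hX] at hc
  rcases (htd.isSeparation t u).forall_subset_or (htd.sideVerts_inter_subset h) hB hc with h' | h'
  · exact Or.inr fun w hw => h' w (by rwa [inter_comm])
  · exact Or.inl h'

theorem exists_mem_edgeSide_of_pointsTo (htd : IsTreeDecomp G Tr 𝒱) (hB : IsModelOf G H B)
    {U : Set W} (hU : U.ncard = k) {F : Set T} (hUF : ∀ w ∈ U, ∃ s ∈ F, (B w ∩ 𝒱 s).Nonempty)
    {t u : T} (h : Tr.Adj t u) (hS : (𝒱 t ∩ 𝒱 u).Finite) (hSk : (𝒱 t ∩ 𝒱 u).ncard < k)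
    (hP : PointsTo Tr 𝒱 B t u) : (F ∩ Tr.edgeSide t u).Nonempty := by
  obtain ⟨hXfin, hXcard⟩ := finite_ncard_setOf_not_disjoint (fun _ _ => hB.disjoint) hS
  obtain ⟨w, hwU, hw⟩ := exists_mem_notMem_of_ncard_lt_ncard
    (hXcard.trans_lt (hSk.trans_eq hU.symm)) hXfin
  have hw' : Disjoint (B w) (𝒱 t ∩ 𝒱 u) := not_not.1 hw
  obtain ⟨s, hsF, x, hxB, hxs⟩ := hUF w hwU
  refine ⟨s, hsF, (mem_edgeSide_or htd.tree.connected.preconnected t u s).resolve_right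
    fun hsu => ?_⟩
  exact Set.disjoint_left.1 hw' hxB
    (htd.sideVerts_inter_subset h ⟨subset_sideVerts hsu hxs, hP w hw' hxB⟩)

theorem exists_forall_pointsTo (htd : IsTreeDecomp G Tr 𝒱) (hB : IsModelOf G H B)
    (hH : KConnected H k)
    (hadh : ∀ ⦃t u : T⦄, Tr.Adj t u → (𝒱 t ∩ 𝒱 u).Finite ∧ (𝒱 t ∩ 𝒱 u).ncard < k) :
    ∃ t, ∀ u, Tr.Adj t u → PointsTo Tr 𝒱 B u t := by
  obtain ⟨U, hUfin, hU⟩ := hH.exists_finite_ncard_eq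
  have hmeet : ∀ w, ∃ s, (B w ∩ 𝒱 s).Nonempty := fun w => by
    obtain ⟨x, hx⟩ := hB.nonempty w
    obtain ⟨s, hs⟩ := htd.coverV x
    exact ⟨s, x, hx, hs⟩
  choose s hs using hmeet
  exact htd.tree.exists_sink (fun t u h => htd.pointsTo_or hB hH h (hadh h).1 (hadh h).2)
    (hUfin.image s) fun t u h hP => htd.exists_mem_edgeSide_of_pointsTo hB hU
      (fun w hw => ⟨s w, mem_image_of_mem s hw, hs w⟩) h (hadh h).1 (hadh h).2 hP

theorem inter_nonempty_of_forall_pointsTo (htd : IsTreeDecomp G Tr 𝒱) {t : T}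
    (ht : ∀ u, Tr.Adj t u → PointsTo Tr 𝒱 B u t) {w : W} (hne : (B w).Nonempty) :
    (B w ∩ 𝒱 t).Nonempty := by
  by_contra hw
  obtain ⟨x, hx⟩ := hne
  obtain ⟨u, hu, hxu⟩ := htd.exists_adj_notMem_sideVerts fun hxt => hw ⟨x, hx, hxt⟩
  exact hxu (ht u hu w (Set.disjoint_left.2 fun y hy hyS => hw ⟨y, hy, hyS.2⟩) hx)

end IsTreeDecomp

/-- If `H` is `k`-connected and a minor of `G`, and `G` has a tree-decomposition of
adhesion `< k` whose adhesion sets are complete in `G`, then `H` is a minor of some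
part-induced subgraph `G[V_t]`. -/
theorem stmt_4 {V W T : Type} (G : SimpleGraph V) (H : SimpleGraph W) (k : ℕ)
    (hH : KConnected H k) (hminor : IsMinorOf H G)
    (Tr : SimpleGraph T) (𝒱 : T → Set V) (htd : IsTreeDecomp G Tr 𝒱)
    (hadh : ∀ ⦃t u : T⦄, Tr.Adj t u → (𝒱 t ∩ 𝒱 u).Finite ∧ (𝒱 t ∩ 𝒱 u).ncard < k)
    (hcomplete : ∀ ⦃t u : T⦄, Tr.Adj t u →
      ∀ a ∈ 𝒱 t ∩ 𝒱 u, ∀ b ∈ 𝒱 t ∩ 𝒱 u, a ≠ b → G.Adj a b) :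
    ∃ t : T, IsMinorOf H (G.induce (𝒱 t)) := by
  obtain ⟨B, hB⟩ := hminor
  obtain ⟨t, ht⟩ := htd.exists_forall_pointsTo hB hH hadh
  exact ⟨t, _, hB.induce (htd.isCliqueSeparated fun _ hu => hcomplete hu)
    fun w => htd.inter_nonempty_of_forall_pointsTo ht (hB.nonempty w)⟩
end

section
/- Let D be a cycle in a graph and let D′ be a cycle with |V(D′)| ≥ |V(D)|·m that intersects D in at least 2 vertices. Then D′ contains a D-path (a path with both endvertices on D and no inner vertex on D) of length at least m. -/
open SimpleGraph

/-!
Rotate `D'` to start at a common vertex `a` and cut it at a second common vertex `b` into two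
`a`–`b` paths. The vertices of `D` met after the start of each path cut it into `D`-paths, one per
such vertex, and the two paths together meet at most `|D|` of them. Since `D'` has length at least
`m |D|`, one of the two paths has length at least `m` times its number of pieces, so one of its
pieces has length at least `m`.
-/

namespace SimpleGraph.Walk

variable {V : Type*} {G : SimpleGraph V} {S : Set V} {m : ℕ}

variable (S m) in
def HasLongSPath {u v : V} (p : G.Walk u v) : Prop :=
  ∃ (x y : V) (q : G.Walk x y), q.IsPath ∧ (∀ e ∈ q.edges, e ∈ p.edges) ∧ x ∈ S ∧ y ∈ S ∧
    (∀ w ∈ q.support, w ≠ x → w ≠ y → w ∉ S) ∧ m ≤ q.length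

lemma HasLongSPath.mono {u v u' v' : V} {p : G.Walk u v} {p' : G.Walk u' v'}
    (h : p.HasLongSPath S m) (hpp' : ∀ e ∈ p.edges, e ∈ p'.edges) : p'.HasLongSPath S m := by
  obtain ⟨x, y, q, hq, hqp, hx, hy, hinner, hlen⟩ := h
  exact ⟨x, y, q, hq, fun e he => hpp' e (hqp e he), hx, hy, hinner, hlen⟩

lemma exists_eq_append_first_mem {x y : V} (p : G.Walk x y) (hp : ¬p.Nil) (hy : y ∈ S) :
    ∃ z ∈ S, ∃ (q₁ : G.Walk x z) (q₂ : G.Walk z y), p = q₁.append q₂ ∧ ¬q₁.Nil ∧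
      ∀ w ∈ q₁.support.tail, w ∈ S → w = z := by
  induction p with
  | nil => exact absurd Nil.nil hp
  | @cons x w y h p ih =>
    by_cases hw : w ∈ S
    · exact ⟨w, hw, cons h nil, p, rfl, not_nil_cons, by simp⟩
    · obtain ⟨z, hz, q₁, q₂, rfl, -, hfirst⟩ := ih (fun hnil => hw (hnil.eq ▸ hy)) hy
      refine ⟨z, hz, cons h q₁, q₂, rfl, not_nil_cons, fun v hv hvS => ?_⟩
      rw [support_cons, List.tail_cons, ← cons_tail_support, List.mem_cons] at hv
      rcases hv with rfl | hv
      · exact absurd hvS hw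
      · exact hfirst v hv hvS

lemma IsPath.hasLongSPath [DecidablePred (· ∈ S)] {x y : V} {p : G.Walk x y} (hp : p.IsPath)
    (hpn : ¬p.Nil) (hx : x ∈ S) (hy : y ∈ S)
    (hlen : m * p.support.tail.countP (· ∈ S) ≤ p.length) : p.HasLongSPath S m := by
  obtain ⟨z, hz, q₁, q₂, rfl, hq₁, hfirst⟩ := p.exists_eq_append_first_mem hpn hy
  by_cases hq₁m : m ≤ q₁.length
  · refine ⟨x, z, q₁, hp.of_append_left, fun e he => by simp [he], hx, hz,
      fun w hw hwx hwz hwS => hwz (hfirst w ?_ hwS), hq₁m⟩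
    rwa [← cons_tail_support, List.mem_cons, or_iff_right hwx] at hw
  · have hcount : 0 < q₁.support.tail.countP (· ∈ S) :=
      List.countP_pos_iff.2 ⟨z, end_mem_tail_support hq₁, by simpa using hz⟩
    have hm_le : m ≤ m * q₁.support.tail.countP (· ∈ S) := Nat.le_mul_of_pos_right m hcount
    rw [tail_support_append, List.countP_append, length_append, mul_add] at hlen
    have hq₂ : ¬q₂.Nil := fun hnil => by
      have hq₂0 := hnil.length_eq_zero
      omega
    exact (hp.of_append_right.hasLongSPath hq₂ hz hy (by omega)).mono (fun e he => by simp [he])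
termination_by p.length
decreasing_by
  subst_vars
  rw [length_append]
  have := (not_nil_iff_lt_length).1 hq₁
  omega

lemma IsCycle.hasLongSPath [DecidablePred (· ∈ S)] {a b : V} {c : G.Walk a a} (hc : c.IsCycle)
    (hb : b ∈ c.support) (hab : a ≠ b) (ha : a ∈ S) (hbS : b ∈ S)
    (hlen : m * c.support.tail.countP (· ∈ S) ≤ c.length) : c.HasLongSPath S m := by
  classical
  obtain ⟨p, q, rfl⟩ : ∃ (p : G.Walk a b) (q : G.Walk b a), c = p.append q :=
    ⟨_, _, (take_spec c hb).symm⟩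
  have hp : ¬p.Nil := not_nil_of_ne hab
  have hq : ¬q.Nil := not_nil_of_ne hab.symm
  rw [tail_support_append, List.countP_append, length_append, mul_add] at hlen
  by_cases hpm : m * p.support.tail.countP (· ∈ S) ≤ p.length
  · exact ((hc.isPath_of_append_left hq).hasLongSPath hp ha hbS hpm).mono
      (fun e he => by simp [he])
  · exact ((hc.isPath_of_append_right hp).hasLongSPath hq hbS ha (by omega)).mono
      (fun e he => by simp [he])

lemma IsCycle.countP_le_length [DecidablePred (· ∈ S)] {u : V} {d : G.Walk u u}
    (hd : d.IsCycle) (hS : S ⊆ {v | v ∈ d.support}) {l : List V} (hl : l.Nodup) :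
    l.countP (· ∈ S) ≤ d.length := by
  have hsub : l.filter (· ∈ S) ⊆ d.support.tail := fun v hv => by
    have hv : v ∈ d.support := hS (by simpa using (List.mem_filter.1 hv).2)
    rw [← cons_tail_support, List.mem_cons] at hv
    rcases hv with rfl | hv
    · exact end_mem_tail_support hd.not_nil
    · exact hv
  rw [List.countP_eq_length_filter]
  simpa [length_support] using ((hl.filter _).subperm hsub).length_le

end SimpleGraph.Walk

theorem stmt_9_general {V : Type*} (G : SimpleGraph V) (m : ℕ)
    {u u' : V} (d : G.Walk u u) (d' : G.Walk u' u')
    (hd : d.IsCycle) (hd' : d'.IsCycle)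
    (hlen : d.length * m ≤ d'.length)
    (hmeet : ∃ a b : V, a ≠ b ∧ a ∈ d.support ∧ a ∈ d'.support ∧
      b ∈ d.support ∧ b ∈ d'.support) :
    ∃ (x y : V) (p : G.Walk x y), p.IsPath ∧ (∀ e ∈ p.edges, e ∈ d'.edges) ∧
      x ∈ d.support ∧ y ∈ d.support ∧
      (∀ v ∈ p.support, v ≠ x → v ≠ y → v ∉ d.support) ∧
      m ≤ p.length := by
  classical
  obtain ⟨a, b, hab, haD, haD', hbD, hbD'⟩ := hmeet
  have hrot : (d'.rotate a haD').IsCycle := hd'.rotate haD'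
  have hb : b ∈ (d'.rotate a haD').support := (Walk.mem_support_rotate_iff ..).2 hbD'
  have hcount := hd.countP_le_length (S := {v | v ∈ d.support}) subset_rfl hrot.support_nodup
  have hlong := hrot.hasLongSPath hb hab haD hbD <| by
    rw [Walk.length_rotate]
    exact (Nat.mul_le_mul_left m hcount).trans (mul_comm m _ ▸ hlen)
  exact hlong.mono fun e he => (Walk.rotate_edges d' a haD').perm.mem_iff.1 he

/-- If `d'` is a cycle with at least `d.length * m` vertices meeting a cycle `d` in at
least two vertices, then `d'` contains a `d`-path of length at least `m`. -/
theorem stmt_9 {V : Type*} (G : SimpleGraph V) (m : ℕ) (hm : 1 ≤ m)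
    {u u' : V} (d : G.Walk u u) (d' : G.Walk u' u')
    (hd : d.IsCycle) (hd' : d'.IsCycle)
    (hlen : d.length * m ≤ d'.length)
    (hmeet : ∃ a b : V, a ≠ b ∧ a ∈ d.support ∧ a ∈ d'.support ∧
      b ∈ d.support ∧ b ∈ d'.support) :
    ∃ (x y : V) (p : G.Walk x y), p.IsPath ∧ (∀ e ∈ p.edges, e ∈ d'.edges) ∧
      x ∈ d.support ∧ y ∈ d.support ∧
      (∀ v ∈ p.support, v ≠ x → v ≠ y → v ∉ d.support) ∧
      m ≤ p.length :=
  stmt_9_general G m d d' hd hd' hlen hmeet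
end

section
/- For every vertex v of the graph D_{k+1}, the wheel W_k is a minor of D_{k+1} − v; likewise W_k is a minor of O_{k+1} − v and of M_{k+1} − v for every vertex v, and K_{3,k} is a minor of K_{4,k+1} − v for every vertex v. -/
/-! All four statements are proved by exhibiting an explicit model. `K_{3,k}` is even a subgraph
of `K_{4,k+1} − v`. For the wheel, the surviving vertices are listed as `ι 0, ι 1, …, ι (n - 1)` and
cut into consecutive blocks by a monotone labelling `β : ℕ → ℕ`: block `0` becomes the hub and
blocks `1, …, k` the rim. Blocks are connected because consecutive indices inside a block are
adjacent and disjoint because `ι` is injective, so only the hub and rim edges between blocks remain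
to be found, and these are checked on the indices, in `ℕ` instead of `ZMod`.

In `D_{k+1} − v` one apex is the hub and the rim is the cycle with one edge contracted, or the path
closed up through the other apex. In `O_{k+1} − v` the hub is the rest of the row of `v` and the
rim is the other row with one edge contracted. In `M_{k+1} − v` the hub is a path of `k - 1`
vertices and the rim the `(k + 2)`-cycle on the other vertices, with two edges contracted. -/

open SimpleGraph

/-- The wheel `W_k`: a cycle of length `k` (on `ZMod k`) plus a hub `none` adjacent to
all cycle vertices. -/
def wheel (k : ℕ) : SimpleGraph (Option (ZMod k)) :=
  SimpleGraph.fromRel (fun a b =>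
    match a, b with
    | none, some _ => True
    | some i, some j => j = i + 1
    | _, _ => False)

/-- `D_k`: a cycle of length `k` plus two additional nonadjacent vertices each adjacent
to all cycle vertices. -/
def Dgraph (k : ℕ) : SimpleGraph (ZMod k ⊕ Fin 2) :=
  SimpleGraph.fromRel (fun a b =>
    match a, b with
    | .inl i, .inl j => j = i + 1
    | .inl _, .inr _ => True
    | _, _ => False)

/-- `O_k`: the circular ladder on `2k` vertices. -/
def Ograph (k : ℕ) : SimpleGraph (ZMod k × ZMod 2) :=
  SimpleGraph.fromRel (fun p q =>
    (p.2 = q.2 ∧ q.1 = p.1 + 1) ∨ (p.1 = q.1 ∧ q.2 = p.2 + 1))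

/-- `M_k`: the Möbius ladder on `2k` vertices. -/
def Mgraph (k : ℕ) : SimpleGraph (ZMod (2 * k)) :=
  SimpleGraph.fromRel (fun i j => j = i + 1 ∨ j = i + k)

/-- `R_2`: a ray `0, 1, 2, …` plus two nonadjacent vertices each adjacent to every
vertex of the ray. -/
def R2 : SimpleGraph (ℕ ⊕ Fin 2) :=
  SimpleGraph.fromRel (fun a b =>
    match a, b with
    | .inl i, .inl j => j = i + 1
    | .inl _, .inr _ => True
    | _, _ => False)

namespace ZMod

theorem val_add_one_eq_or {k : ℕ} [NeZero k] (i : ZMod k) :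
    (i + 1).val = i.val + 1 ∨ (i.val + 1 = k ∧ (i + 1).val = 0) := by
  rw [ZMod.val_add, ZMod.val_one_eq_one_mod, Nat.add_mod_mod]
  rcases Nat.lt_or_eq_of_le (ZMod.val_lt i : i.val + 1 ≤ k) with h | h
  · exact Or.inl (Nat.mod_eq_of_lt h)
  · exact Or.inr ⟨h, by rw [show i.val + 1 = k from h, Nat.mod_self]⟩

theorem natCast_injOn_Ico (a N : ℕ) :
    Set.InjOn (Nat.cast : ℕ → ZMod N) (Set.Ico a (a + N)) := by
  intro x hx y hy hxy
  refine ((ZMod.natCast_eq_natCast_iff x y N).1 hxy).eq_of_abs_lt ?_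
  rw [Set.mem_Ico] at hx hy
  rw [abs_sub_lt_iff]
  omega

theorem natCast_ne_zero_of_pos_of_lt {a N : ℕ} (h₀ : 0 < a) (h : a < N) :
    (a : ZMod N) ≠ 0 :=
  (ZMod.natCast_eq_zero_iff a N).not.mpr (Nat.not_dvd_of_pos_of_lt h₀ h)

end ZMod

namespace IsModelOf

variable {V W : Type*} {G : SimpleGraph V} {H : SimpleGraph W} {B : W → Set V}

theorem isMinorOf_induce (hB : IsModelOf G H B) {s : Set V} (hs : ∀ w, B w ⊆ s) :
    IsMinorOf H (G.induce s) := by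
  obtain ⟨hne, hconn, hdisj, hadj⟩ := hB
  refine ⟨fun w => Subtype.val ⁻¹' B w, fun w => ?_, fun w => ?_, ?_, ?_⟩
  · obtain ⟨x, hx⟩ := hne w
    exact ⟨⟨x, hs w hx⟩, hx⟩
  · let e : (G.induce s).induce (Subtype.val ⁻¹' B w) ≃g G.induce (B w) :=
      { toFun := fun x => ⟨x.1.1, x.2⟩
        invFun := fun x => ⟨⟨x.1, hs w x.2⟩, x.2⟩
        left_inv := fun _ => rfl
        right_inv := fun _ => rfl
        map_rel_iff' := Iff.rfl }
    exact e.connected_iff.mpr (hconn w)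
  · exact fun w w' hww' => (hdisj hww').preimage _
  · intro w w' h
    obtain ⟨u, hu, v, hv, huv⟩ := hadj h
    exact ⟨⟨u, hs w hu⟩, hu, ⟨v, hs w' hv⟩, hv, huv⟩

end IsModelOf

theorem isMinorOf_of_injective_hom {V W : Type*} {G : SimpleGraph V} {H : SimpleGraph W}
    (f : H →g G) (hf : Function.Injective f) : IsMinorOf H G := by
  refine ⟨fun w => {f w}, fun w => Set.singleton_nonempty _, fun w => ?_,
    fun w w' hww' => Set.disjoint_singleton.mpr (hf.ne hww'), fun w w' h => ?_⟩
  · rw [induce_singleton_eq_top]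
    exact connected_top
  · exact ⟨f w, rfl, f w', rfl, f.map_adj h⟩

section LabelFiber

variable {V : Type*} {G : SimpleGraph V} {ι : ℕ → V} {β : ℕ → ℕ} {n : ℕ}

def labelFiber (ι : ℕ → V) (β : ℕ → ℕ) (n m : ℕ) : Set V :=
  ι '' {j | j < n ∧ β j = m}

theorem labelFiber_disjoint (hι : Set.InjOn ι (Set.Iio n)) {m m' : ℕ} (h : m ≠ m') :
    Disjoint (labelFiber ι β n m) (labelFiber ι β n m') := by
  rw [Set.disjoint_left]
  rintro _ ⟨j, ⟨hj, rfl⟩, rfl⟩ ⟨j', ⟨hj', hβ⟩, hjj'⟩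
  obtain rfl := hι hj hj' hjj'.symm
  exact h hβ

theorem induce_image_Icc_connected {a b : ℕ} (hab : a ≤ b)
    (hadj : ∀ j, a ≤ j → j < b → G.Adj (ι j) (ι (j + 1))) :
    (G.induce (ι '' Set.Icc a b)).Connected := by
  induction b, hab using Nat.le_induction with
  | base =>
    rw [Set.Icc_self, Set.image_singleton, induce_singleton_eq_top]
    exact connected_top
  | succ b hab ih =>
    have hIcc : Set.Icc a (b + 1) = Set.Icc a b ∪ {b + 1} := by
      ext; simp only [Set.mem_Icc, Set.mem_union, Set.mem_singleton_iff]; omega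
    rw [hIcc, Set.image_union, Set.image_singleton]
    refine connected_induce_union (ih fun j hj hjb => hadj j hj (by omega)).preconnected ?_
      ⟨b, ⟨hab, le_rfl⟩, rfl⟩ rfl (hadj b hab (by omega))
    rw [induce_singleton_eq_top]
    exact connected_top.preconnected

theorem induce_labelFiber_connected (hβ : MonotoneOn β (Set.Iio n))
    (hadj : ∀ j, j + 1 < n → β j = β (j + 1) → G.Adj (ι j) (ι (j + 1))) {m : ℕ}
    (hne : (labelFiber ι β n m).Nonempty) : (G.induce (labelFiber ι β n m)).Connected := by
  obtain ⟨_, ⟨j₀, hj₀, rfl⟩⟩ := hne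
  refine induce_connected_of_patches _ ⟨j₀, hj₀, rfl⟩ ?_
  rintro _ ⟨j, hj, rfl⟩
  obtain ⟨hj₀n, hj₀m⟩ := hj₀
  obtain ⟨hjn, hjm⟩ := hj
  have hlo : β (min j₀ j) = m := by rcases min_choice j₀ j with h | h <;> rwa [h]
  have hhi : β (max j₀ j) = m := by rcases max_choice j₀ j with h | h <;> rwa [h]
  have hIcc : Set.Icc (min j₀ j) (max j₀ j) ⊆ {i | i < n ∧ β i = m} := by
    intro i ⟨hi₁, hi₂⟩
    have hin : i < n := by omega
    exact ⟨hin, le_antisymm (hhi ▸ hβ hin (by omega : max j₀ j < n) hi₂)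
      (hlo ▸ hβ (by omega : min j₀ j < n) hin hi₁)⟩
  refine ⟨_, Set.image_mono hIcc, ⟨j₀, ⟨by omega, by omega⟩, rfl⟩, ⟨j, ⟨by omega, by omega⟩, rfl⟩,
    (induce_image_Icc_connected (min_le_max) fun i hi₁ hi₂ => ?_).preconnected _ _⟩
  have hi : i + 1 ∈ Set.Icc (min j₀ j) (max j₀ j) := ⟨by omega, by omega⟩
  exact hadj i (hIcc hi).1 ((hIcc ⟨hi₁, hi₂.le⟩).2.trans (hIcc hi).2.symm)

end LabelFiber

section WheelLabelling

def LabelsLinked (n : ℕ) (A : ℕ → ℕ → Prop) (β : ℕ → ℕ) (a b : ℕ) : Prop :=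
  ∃ j < n, ∃ j' < n, β j = a ∧ β j' = b ∧ A j j'

/-- A labelling `β` of the indices `j < n` by `0, …, k` whose fibres, joined along the relation
`A`, form a model of `W_k`: label `0` is the hub and label `r ≥ 1` the rim vertex `r - 1`. -/
structure IsWheelLabelling (k n : ℕ) (A : ℕ → ℕ → Prop) (β : ℕ → ℕ) : Prop where
  monotoneOn : MonotoneOn β (Set.Iio n)
  rel_of_eq : ∀ j, j + 1 < n → β j = β (j + 1) → A j (j + 1)
  hub : ∀ r, 1 ≤ r → r ≤ k → LabelsLinked n A β 0 r
  rim : ∀ r, 1 ≤ r → r < k → LabelsLinked n A β r (r + 1)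
  close : LabelsLinked n A β 1 k

variable {V : Type*} {G : SimpleGraph V} {ι : ℕ → V} {k n : ℕ} {A : ℕ → ℕ → Prop} {β : ℕ → ℕ}

theorem LabelsLinked.exists_adj (hA : ∀ j < n, ∀ j' < n, A j j' → G.Adj (ι j) (ι j'))
    {a b : ℕ} (h : LabelsLinked n A β a b) :
    ∃ u ∈ labelFiber ι β n a, ∃ v ∈ labelFiber ι β n b, G.Adj u v := by
  obtain ⟨j, hj, j', hj', rfl, rfl, hjj'⟩ := h
  exact ⟨ι j, ⟨j, ⟨hj, rfl⟩, rfl⟩, ι j', ⟨j', ⟨hj', rfl⟩, rfl⟩, hA j hj j' hj' hjj'⟩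

def wheelLabel {k : ℕ} : Option (ZMod k) → ℕ
  | none => 0
  | some i => i.val + 1

theorem wheelLabel_injective {k : ℕ} [NeZero k] : Function.Injective (wheelLabel (k := k)) := by
  rintro (_ | i) (_ | i') h
  · rfl
  · exact absurd h (Nat.succ_ne_zero _).symm
  · exact absurd h (Nat.succ_ne_zero _)
  · exact congrArg some (ZMod.val_injective _ (Nat.succ_injective h))

theorem IsWheelLabelling.isModelOf [NeZero k] (h : IsWheelLabelling k n A β)
    (hι : Set.InjOn ι (Set.Iio n)) (hA : ∀ j < n, ∀ j' < n, A j j' → G.Adj (ι j) (ι j')) :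
    IsModelOf G (wheel k) fun w : Option (ZMod k) => labelFiber ι β n (wheelLabel w) := by
  have hk : 1 ≤ k := Nat.one_le_iff_ne_zero.mpr (NeZero.ne k)
  have hlink {a b : ℕ} (hab : LabelsLinked n A β a b) := hab.exists_adj hA
  have hne : ∀ w : Option (ZMod k), (labelFiber ι β n (wheelLabel w)).Nonempty := by
    rintro (_ | i)
    · obtain ⟨u, hu, -⟩ := hlink (h.hub 1 le_rfl hk)
      exact ⟨u, hu⟩
    · obtain ⟨-, -, v, hv, -⟩ := hlink (h.hub (i.val + 1) le_add_self (ZMod.val_lt i))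
      exact ⟨v, hv⟩
  refine ⟨hne, fun w => ?_, fun w w' hww' => ?_, ?_⟩
  · refine induce_labelFiber_connected h.monotoneOn (fun j hj hβ => ?_) (hne w)
    exact hA j (by omega) (j + 1) hj (h.rel_of_eq j hj hβ)
  · exact labelFiber_disjoint hι (wheelLabel_injective.ne hww')
  · have hsymm {a b : ℕ} : (∃ u ∈ labelFiber ι β n a, ∃ v ∈ labelFiber ι β n b, G.Adj u v) →
        ∃ u ∈ labelFiber ι β n b, ∃ v ∈ labelFiber ι β n a, G.Adj u v := by
      rintro ⟨u, hu, v, hv, huv⟩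
      exact ⟨v, hv, u, hu, huv.symm⟩
    have hspoke (i : ZMod k) := hlink (h.hub (i.val + 1) le_add_self (ZMod.val_lt i))
    have hrim (i : ZMod k) : ∃ u ∈ labelFiber ι β n (i.val + 1),
        ∃ v ∈ labelFiber ι β n ((i + 1).val + 1), G.Adj u v := by
      rcases ZMod.val_add_one_eq_or i with hi | ⟨hi, hi'⟩
      · rw [hi]
        exact hlink (h.rim _ le_add_self (hi ▸ ZMod.val_lt (i + 1)))
      · rw [hi, hi']
        exact hsymm (hlink h.close)
    rintro (_ | i) (_ | i') hadj <;> rw [wheel, fromRel_adj] at hadj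
    · exact absurd rfl hadj.1
    · exact hspoke i'
    · exact hsymm (hspoke i)
    · rcases hadj.2 with rfl | rfl
      exacts [hrim i, hsymm (hrim i')]

theorem IsWheelLabelling.wheel_isMinorOf_induce [NeZero k] (h : IsWheelLabelling k n A β)
    (hι : Set.InjOn ι (Set.Iio n)) (hA : ∀ j < n, ∀ j' < n, A j j' → G.Adj (ι j) (ι j'))
    {s : Set V} (hs : ∀ j < n, ι j ∈ s) : IsMinorOf (wheel k) (G.induce s) :=
  (h.isModelOf hι hA).isMinorOf_induce fun _ => by
    rintro _ ⟨j, ⟨hj, -⟩, rfl⟩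
    exact hs j hj

end WheelLabelling

theorem dgraph_adj_inl_inr {n : ℕ} (x : ZMod n) (t : Fin 2) :
    (Dgraph n).Adj (.inl x) (.inr t) := by
  rw [Dgraph, fromRel_adj]
  exact ⟨Sum.inl_ne_inr, Or.inl trivial⟩

theorem dgraph_adj_inl_of_eq_add_one {n : ℕ} [Fact (1 < n)] {x y : ZMod n} (h : y = x + 1) :
    (Dgraph n).Adj (.inl x) (.inl y) := by
  rw [Dgraph, fromRel_adj]
  subst h
  exact ⟨by simp, Or.inl rfl⟩

/-- The wheel with hub `0` and rim `1, …, k + 1`, less the spoke to `k + 1`: a subgraph of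
`D_{k+1} − v` for every vertex `v`. -/
def dLabelRel (k j j' : ℕ) : Prop :=
  (j = 0 ∧ 1 ≤ j' ∧ j' ≤ k) ∨ (1 ≤ j ∧ j' = j + 1) ∨ (j = 1 ∧ j' = k + 1)

theorem isWheelLabelling_dLabelRel {k : ℕ} (hk : 1 ≤ k) :
    IsWheelLabelling k (k + 2) (dLabelRel k) (fun j => min j k) where
  monotoneOn _ _ _ _ h := min_le_min_right k h
  rel_of_eq j hj h := by dsimp only [dLabelRel] at h ⊢; omega
  hub r _ _ := ⟨0, by omega, r, by omega, by dsimp only [dLabelRel]; omega⟩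
  rim r _ _ := ⟨r, by omega, r + 1, by omega, by dsimp only [dLabelRel]; omega⟩
  close := ⟨1, by omega, k + 1, by omega, by dsimp only [dLabelRel]; omega⟩

def dgraphApexEnum (k : ℕ) (t : Fin 2) (j : ℕ) : ZMod (k + 1) ⊕ Fin 2 :=
  if j = 0 then .inr (t + 1) else .inl j

theorem dgraphApexEnum_of_ne_zero {k j : ℕ} (t : Fin 2) (h : j ≠ 0) :
    dgraphApexEnum k t j = .inl j :=
  if_neg h

theorem wheel_isMinorOf_dgraph_induce_compl_inr {k : ℕ} (hk : 1 ≤ k) (t : Fin 2) :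
    IsMinorOf (wheel k) ((Dgraph (k + 1)).induce {.inr t}ᶜ) := by
  have : NeZero k := ⟨by omega⟩
  have : Fact (1 < k + 1) := ⟨by omega⟩
  refine (isWheelLabelling_dLabelRel hk).wheel_isMinorOf_induce (ι := dgraphApexEnum k t)
    (fun i (hi : i < k + 2) j (hj : j < k + 2) h => ?_) (fun j _ j' _ h => ?_) (fun j _ => ?_)
  · simp only [dgraphApexEnum] at h
    split_ifs at h <;> simp only [Sum.inl.injEq] at h
    · omega
    · exact ZMod.natCast_injOn_Ico 1 (k + 1) ⟨by omega, by omega⟩ ⟨by omega, by omega⟩ h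
  · rcases h with ⟨rfl, h₁, -⟩ | ⟨h₁, rfl⟩ | ⟨rfl, rfl⟩
    · rw [dgraphApexEnum_of_ne_zero (j := j') t (by omega)]
      exact (dgraph_adj_inl_inr _ _).symm
    · rw [dgraphApexEnum_of_ne_zero (j := j) t (by omega),
        dgraphApexEnum_of_ne_zero (j := j + 1) t (by omega)]
      exact dgraph_adj_inl_of_eq_add_one (by push_cast; ring)
    · rw [dgraphApexEnum_of_ne_zero (j := 1) t (by omega),
        dgraphApexEnum_of_ne_zero (j := k + 1) t (by omega)]
      exact (dgraph_adj_inl_of_eq_add_one (by simp)).symm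
  · simp only [dgraphApexEnum]
    split_ifs <;> simp only [Set.mem_compl_iff, Set.mem_singleton_iff, Sum.inr.injEq,
      reduceCtorEq, not_false_eq_true]
    revert t; decide

def dgraphCycleEnum (k : ℕ) (c : ZMod (k + 1)) (j : ℕ) : ZMod (k + 1) ⊕ Fin 2 :=
  if j = 0 then .inr 0 else if j = k + 1 then .inr 1 else .inl (c + j)

theorem dgraphCycleEnum_of_ne {k j : ℕ} (c : ZMod (k + 1)) (h₀ : j ≠ 0) (h₁ : j ≠ k + 1) :
    dgraphCycleEnum k c j = .inl (c + j) := by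
  rw [dgraphCycleEnum, if_neg h₀, if_neg h₁]

theorem wheel_isMinorOf_dgraph_induce_compl_inl {k : ℕ} (hk : 1 ≤ k) (c : ZMod (k + 1)) :
    IsMinorOf (wheel k) ((Dgraph (k + 1)).induce {.inl c}ᶜ) := by
  have : NeZero k := ⟨by omega⟩
  have : Fact (1 < k + 1) := ⟨by omega⟩
  refine (isWheelLabelling_dLabelRel hk).wheel_isMinorOf_induce (ι := dgraphCycleEnum k c)
    (fun i (hi : i < k + 2) j (hj : j < k + 2) h => ?_) (fun j _ j' _ h => ?_) (fun j _ => ?_)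
  · simp only [dgraphCycleEnum] at h
    split_ifs at h <;> simp only [Sum.inl.injEq, Sum.inr.injEq, add_right_inj] at h <;> try omega
    exact ZMod.natCast_injOn_Ico 1 (k + 1) ⟨by omega, by omega⟩ ⟨by omega, by omega⟩ h
  · rcases h with ⟨rfl, h₁, h₂⟩ | ⟨h₁, rfl⟩ | ⟨rfl, rfl⟩
    · rw [dgraphCycleEnum_of_ne c (j := j') (by omega) (by omega)]
      exact (dgraph_adj_inl_inr _ _).symm
    · rw [dgraphCycleEnum_of_ne c (j := j) (by omega) (by omega)]
      by_cases hj : j + 1 = k + 1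
      · rw [hj, dgraphCycleEnum, if_neg (by omega), if_pos rfl]
        exact dgraph_adj_inl_inr _ _
      · rw [dgraphCycleEnum_of_ne c (j := j + 1) (by omega) hj]
        exact dgraph_adj_inl_of_eq_add_one (by push_cast; ring)
    · rw [dgraphCycleEnum_of_ne c (j := 1) (by omega) (by omega), dgraphCycleEnum,
        if_neg (by omega), if_pos rfl]
      exact dgraph_adj_inl_inr _ _
  · simp only [dgraphCycleEnum]
    split_ifs <;> simp only [Set.mem_compl_iff, Set.mem_singleton_iff, Sum.inl.injEq,
      reduceCtorEq, not_false_eq_true, add_eq_left]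
    exact ZMod.natCast_ne_zero_of_pos_of_lt (by omega) (by omega)

theorem wheel_isMinorOf_dgraph_induce_compl {k : ℕ} (hk : 1 ≤ k) (v : ZMod (k + 1) ⊕ Fin 2) :
    IsMinorOf (wheel k) ((Dgraph (k + 1)).induce {v}ᶜ) := by
  rcases v with c | t
  exacts [wheel_isMinorOf_dgraph_induce_compl_inl hk c,
    wheel_isMinorOf_dgraph_induce_compl_inr hk t]

theorem ograph_adj_of_eq_add_one {n : ℕ} [Fact (1 < n)] {x y : ZMod n} (b : ZMod 2)
    (h : y = x + 1) : (Ograph n).Adj (x, b) (y, b) := by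
  rw [Ograph, fromRel_adj]
  subst h
  exact ⟨by simp, Or.inl (Or.inl ⟨rfl, rfl⟩)⟩

theorem ograph_adj_add_one_snd {n : ℕ} (x : ZMod n) (b : ZMod 2) :
    (Ograph n).Adj (x, b) (x, b + 1) := by
  rw [Ograph, fromRel_adj]
  exact ⟨by simp, Or.inl (Or.inr ⟨rfl, rfl⟩)⟩

def oLabelRel (k j j' : ℕ) : Prop :=
  (j' = j + 1 ∧ j' ≠ k) ∨ (j < k ∧ j' = j + k) ∨ (j = k ∧ j' = 2 * k)

theorem isWheelLabelling_oLabelRel {k : ℕ} (hk : 1 ≤ k) :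
    IsWheelLabelling k (2 * k + 1) (oLabelRel k) (fun j => min (j + 1 - k) k) where
  monotoneOn _ _ _ _ h := min_le_min_right k (Nat.sub_le_sub_right (by omega) k)
  rel_of_eq j hj h := by dsimp only [oLabelRel] at h ⊢; omega
  hub r _ _ := ⟨r - 1, by omega, r - 1 + k, by omega, by dsimp only [oLabelRel]; omega⟩
  rim r _ _ := ⟨r + k - 1, by omega, r + k, by omega, by dsimp only [oLabelRel]; omega⟩
  close := ⟨k, by omega, 2 * k, by omega, by dsimp only [oLabelRel]; omega⟩

/-- The hub is the row of `v` without `v` (indices `j < k`); the rim is the other row, starting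
at `v.1 + 1` for `j = k`, as `k + 2 ≡ 1` in `ZMod (k + 1)`. -/
def ographEnum (k : ℕ) (v : ZMod (k + 1) × ZMod 2) (j : ℕ) : ZMod (k + 1) × ZMod 2 :=
  if j < k then (v.1 + (j + 1 : ℕ), v.2) else (v.1 + (j + 2 : ℕ), v.2 + 1)

theorem ographEnum_of_lt {k j : ℕ} (v : ZMod (k + 1) × ZMod 2) (h : j < k) :
    ographEnum k v j = (v.1 + (j + 1 : ℕ), v.2) :=
  if_pos h

theorem ographEnum_of_le {k j : ℕ} (v : ZMod (k + 1) × ZMod 2) (h : k ≤ j) :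
    ographEnum k v j = (v.1 + (j + 2 : ℕ), v.2 + 1) :=
  if_neg (by omega)

theorem wheel_isMinorOf_ograph_induce_compl {k : ℕ} (hk : 1 ≤ k) (v : ZMod (k + 1) × ZMod 2) :
    IsMinorOf (wheel k) ((Ograph (k + 1)).induce {v}ᶜ) := by
  have : NeZero k := ⟨by omega⟩
  have : Fact (1 < k + 1) := ⟨by omega⟩
  have hcast : ((k + 1 : ℕ) : ZMod (k + 1)) = 0 := ZMod.natCast_self _
  push_cast at hcast
  refine (isWheelLabelling_oLabelRel hk).wheel_isMinorOf_induce (ι := ographEnum k v)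
    (fun i (hi : i < 2 * k + 1) j (hj : j < 2 * k + 1) h => ?_) (fun j _ j' _ h => ?_)
    (fun j _ => ?_)
  · simp only [ographEnum] at h
    split_ifs at h <;> simp only [Prod.mk.injEq, add_right_inj, left_eq_add,
      add_eq_left, one_ne_zero, and_false] at h
    · exact Nat.succ_injective (ZMod.natCast_injOn_Ico 1 (k + 1) ⟨by omega, by omega⟩
        ⟨by omega, by omega⟩ h.1)
    · exact Nat.add_right_cancel (ZMod.natCast_injOn_Ico (k + 2) (k + 1) ⟨by omega, by omega⟩
        ⟨by omega, by omega⟩ h.1)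
  · rcases h with ⟨rfl, hj⟩ | ⟨hj, rfl⟩ | ⟨rfl, rfl⟩
    · rcases lt_or_ge j k with hjk | hjk
      · rw [ographEnum_of_lt v hjk, ographEnum_of_lt v (by omega)]
        exact ograph_adj_of_eq_add_one _ (by push_cast; ring)
      · rw [ographEnum_of_le v hjk, ographEnum_of_le v (by omega)]
        exact ograph_adj_of_eq_add_one _ (by push_cast; ring)
    · rw [ographEnum_of_lt v hj, ographEnum_of_le v (by omega)]
      convert ograph_adj_add_one_snd _ _ using 3
      push_cast
      linear_combination hcast
    · rw [ographEnum_of_le v le_rfl, ographEnum_of_le v (by omega)]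
      exact (ograph_adj_of_eq_add_one _ (by push_cast; linear_combination -hcast)).symm
  · rcases lt_or_ge j k with hjk | hjk
    · rw [ographEnum_of_lt v hjk]
      exact fun h => ZMod.natCast_ne_zero_of_pos_of_lt (by omega) (by omega)
        (add_eq_left.mp (congrArg Prod.fst h))
    · rw [ographEnum_of_le v hjk]
      exact fun h => one_ne_zero (add_eq_left.mp (congrArg Prod.snd h))

theorem mgraph_adj_of_eq_add_one {n : ℕ} (hn : 0 < n) {x y : ZMod (2 * n)} (h : y = x + 1) :
    (Mgraph n).Adj x y := by
  rw [Mgraph, fromRel_adj]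
  subst h
  have h₁ := ZMod.natCast_ne_zero_of_pos_of_lt (N := 2 * n) one_pos (by omega)
  rw [Nat.cast_one] at h₁
  exact ⟨fun h => h₁ (left_eq_add.mp h), Or.inl (Or.inl rfl)⟩

theorem mgraph_adj_of_eq_add {n : ℕ} (hn : 0 < n) {x y : ZMod (2 * n)} (h : y = x + n) :
    (Mgraph n).Adj x y := by
  rw [Mgraph, fromRel_adj]
  subst h
  exact ⟨fun h => ZMod.natCast_ne_zero_of_pos_of_lt hn (by omega) (left_eq_add.mp h),
    Or.inl (Or.inr rfl)⟩

def mLabelRel (k j j' : ℕ) : Prop :=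
  j' = j + 1 ∨ j' = j + (k + 1)

/-- The fibres are `[0, k - 2]` (the hub), `{k - 1, k}`, then `{k + r - 1}` for `2 ≤ r < k`, and
finally `{2k - 1, 2k}`. -/
theorem isWheelLabelling_mLabelRel {k : ℕ} (hk : 2 ≤ k) :
    IsWheelLabelling k (2 * k + 1) (mLabelRel k)
      (fun j => min (j + 2 - k) 1 + min (j - k) (k - 1)) where
  monotoneOn _ _ _ _ h := by dsimp only; omega
  rel_of_eq _ _ _ := Or.inl rfl
  hub r _ _ := by
    rcases eq_or_ne r 1 with rfl | hr
    · exact ⟨k - 2, by omega, k - 1, by omega, by dsimp only [mLabelRel]; omega⟩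
    · exact ⟨r - 2, by omega, r + k - 1, by omega, by dsimp only [mLabelRel]; omega⟩
  rim r _ _ := ⟨r + k - 1, by omega, r + k, by omega, by dsimp only [mLabelRel]; omega⟩
  close := ⟨k - 1, by omega, 2 * k, by omega, by dsimp only [mLabelRel]; omega⟩

def mgraphEnum (k : ℕ) (v : ZMod (2 * (k + 1))) (j : ℕ) : ZMod (2 * (k + 1)) :=
  v + (j + 1 : ℕ)

theorem wheel_isMinorOf_mgraph_induce_compl {k : ℕ} (hk : 2 ≤ k) (v : ZMod (2 * (k + 1))) :
    IsMinorOf (wheel k) ((Mgraph (k + 1)).induce {v}ᶜ) := by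
  have : NeZero k := ⟨by omega⟩
  refine (isWheelLabelling_mLabelRel hk).wheel_isMinorOf_induce (ι := mgraphEnum k v)
    (fun i (hi : i < 2 * k + 1) j (hj : j < 2 * k + 1) h => ?_) (fun j _ j' _ h => ?_)
    (fun j _ => ?_)
  · exact Nat.succ_injective (ZMod.natCast_injOn_Ico 1 (2 * (k + 1)) ⟨by omega, by omega⟩
      ⟨by omega, by omega⟩ (add_left_cancel h))
  · rcases h with rfl | rfl
    · exact mgraph_adj_of_eq_add_one (by omega) (by simp only [mgraphEnum]; push_cast; ring)
    · exact mgraph_adj_of_eq_add (by omega) (by simp only [mgraphEnum]; push_cast; ring)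
  · exact fun h => ZMod.natCast_ne_zero_of_pos_of_lt (by omega) (by omega) (add_eq_left.mp h)

theorem completeBipartiteGraph_isMinorOf_induce_compl (a b : ℕ) (v : Fin (a + 1) ⊕ Fin (b + 1)) :
    IsMinorOf (completeBipartiteGraph (Fin a) (Fin b))
      ((completeBipartiteGraph (Fin (a + 1)) (Fin (b + 1))).induce {v}ᶜ) := by
  obtain ⟨p, q, hv⟩ : ∃ (p : Fin (a + 1)) (q : Fin (b + 1)),
      ∀ x, Sum.map p.succAbove q.succAbove x ≠ v := by
    rcases v with p | q
    · exact ⟨p, 0, by rintro (x | x) <;> simp [Fin.succAbove_ne]⟩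
    · exact ⟨0, q, by rintro (x | x) <;> simp [Fin.succAbove_ne]⟩
  refine isMinorOf_of_injective_hom ⟨fun x => ⟨_, hv x⟩, fun {x y} h => ?_⟩ fun x y h => ?_
  · rcases x with x | x <;> rcases y with y | y <;> simp at h ⊢
  · exact Sum.map_injective.mpr ⟨Fin.succAbove_right_injective, Fin.succAbove_right_injective⟩
      (congrArg Subtype.val h)

/-- For every vertex `v`, `W_k` is a minor of `D_{k+1} − v`, of `O_{k+1} − v` and of
`M_{k+1} − v`, and `K_{3,k}` is a minor of `K_{4,k+1} − v`. -/
theorem stmt_12 (k : ℕ) (hk : 3 ≤ k) :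
    (∀ v, IsMinorOf (wheel k) ((Dgraph (k + 1)).induce ({v}ᶜ))) ∧
    (∀ v, IsMinorOf (wheel k) ((Ograph (k + 1)).induce ({v}ᶜ))) ∧
    (∀ v, IsMinorOf (wheel k) ((Mgraph (k + 1)).induce ({v}ᶜ))) ∧
    (∀ v, IsMinorOf (completeBipartiteGraph (Fin 3) (Fin k))
      ((completeBipartiteGraph (Fin 4) (Fin (k + 1))).induce ({v}ᶜ))) :=
  ⟨wheel_isMinorOf_dgraph_induce_compl (by omega), wheel_isMinorOf_ograph_induce_compl (by omega),
    wheel_isMinorOf_mgraph_induce_compl (by omega),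
    completeBipartiteGraph_isMinorOf_induce_compl 3 k⟩
end

section
/- If G is a rayless k-connected (possibly infinite) graph and U ⊆ V(G) is finite, then there exists a finite k-connected subgraph H of G with U ⊆ V(H). -/
open SimpleGraph

/-- `G` contains a ray (a one-way infinite path) as a subgraph. -/
def HasRay {V : Type*} (G : SimpleGraph V) : Prop :=
  ∃ f : ℕ → V, Function.Injective f ∧ ∀ i, G.Adj (f i) (f (i + 1))

/-!
Build a finite `W ⊇ U` that is *faithful* to `V(G)`: whenever fewer than `k` vertices `S ⊆ W`
leave two vertices of `W` connected in `G - S`, they also leave them connected in `G[W] - S`.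
As every `G - S` is connected, `G[W]` is then `k`-connected once `|W| > k`.

Faithful sets are built for every connected vertex set `C`, relative to a finite family of marks,
by well-founded induction along "pick `v ∈ C` and pass to a component of `C - v` next to `v`";
this is well-founded because an infinite descent would trace a ray. In the step, `N(v)` becomes a
new mark and faithful sets are taken in the components of `C - v` that meet `U` and, for each two
marks, in all components linking them or in `k` of those: fewer than `k` vertices cannot meet `k`
disjoint components, so one of them still links the two marks inside `W`.
-/

namespace Set

variable {α : Type*}

lemma exists_disjoint_of_ncard_lt {ℰ : Set (Set α)} (hℰ : ℰ.PairwiseDisjoint id) {S : Set α}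
    (hS : S.Finite) (h : S.ncard < ℰ.ncard) : ∃ D ∈ ℰ, Disjoint S D := by
  by_contra! hmeet
  have hpick : ∀ D ∈ ℰ, ∃ x, x ∈ S ∩ D := fun D hD =>
    not_disjoint_iff_nonempty_inter.1 (hmeet D hD)
  obtain ⟨D₀, hD₀⟩ := nonempty_of_ncard_ne_zero (Nat.ne_zero_of_lt h)
  have : Nonempty α := ⟨(hpick D₀ hD₀).choose⟩
  choose! g hg using hpick
  have hle : ℰ.ncard ≤ S.ncard := ncard_le_ncard_of_injOn g (fun D hD => (hg D hD).1)
    (fun D hD D' hD' he => hℰ.elim_set hD hD' (g D) (hg D hD).2 (he ▸ (hg D' hD').2)) hS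
  omega

lemma exists_finite_saturating {ι : Type*} {I : Set ι} (hI : I.Finite) (F : ι → Set α) (k : ℕ) :
    ∃ 𝒟 ⊆ ⋃ i ∈ I, F i, 𝒟.Finite ∧ ∀ i ∈ I, F i ⊆ 𝒟 ∨ ∃ ℰ ⊆ F i ∩ 𝒟, ℰ.ncard = k := by
  have hcap : ∀ i, ∃ E ⊆ F i, E.Finite ∧ (F i ⊆ E ∨ E.ncard = k) := fun i => by
    by_cases hk : (k : ℕ∞) ≤ (F i).encard
    · obtain ⟨E, hE, hEk⟩ := exists_subset_encard_eq hk
      exact ⟨E, hE, finite_of_encard_eq_coe hEk, .inr (by rw [ncard_def, hEk]; rfl)⟩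
    · exact ⟨F i, subset_rfl, finite_of_encard_le_coe (not_le.1 hk).le, .inl subset_rfl⟩
  choose E hEF hEfin hE using hcap
  refine ⟨⋃ i ∈ I, E i, iUnion₂_mono fun i _ => hEF i, hI.biUnion fun i _ => hEfin i,
    fun i hi => (hE i).imp (fun h => h.trans (subset_biUnion_of_mem hi)) fun h => ?_⟩
  exact ⟨E i, subset_inter (hEF i) (subset_biUnion_of_mem hi), h⟩

lemma exists_finite_ncard_eq {n : ℕ} (h : n ≤ Nat.card α ∨ Infinite α) :
    ∃ T : Set α, T.Finite ∧ T.ncard = n := by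
  have hn : (n : ℕ∞) ≤ (univ : Set α).encard := by
    rw [encard_univ]
    rcases finite_or_infinite α with hα | hα
    · rw [ENat.card_eq_coe_natCard]
      exact_mod_cast h.resolve_right (not_infinite_iff_finite.2 hα)
    · simp
  obtain ⟨T, -, hT⟩ := exists_subset_encard_eq hn
  exact ⟨T, finite_of_encard_eq_coe hT, by rw [ncard_def, hT]; rfl⟩

def withSingletons (M : Set (Set α)) (W : Set α) : Set (Set α) :=
  M ∪ (fun a => {a}) '' W

variable {M M' : Set (Set α)} {W W' A X : Set α}

lemma withSingletons_mono (hM : M ⊆ M') (hW : W ⊆ W') :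
    M.withSingletons W ⊆ M'.withSingletons W' :=
  union_subset_union hM (image_mono hW)

lemma mem_withSingletons_inter (hX : X ∈ M.withSingletons W) (hXA : (X ∩ A).Nonempty) :
    X ∈ M.withSingletons (W ∩ A) := by
  rcases hX with hX | ⟨a, ha, rfl⟩
  · exact .inl hX
  · obtain ⟨_, rfl, hxA⟩ := hXA
    exact .inr ⟨_, ⟨ha, hxA⟩, rfl⟩

lemma mem_of_mem_withSingletons (hX : X ∈ M.withSingletons W) (hXA : (X ∩ A).Nonempty)
    (hWA : Disjoint W A) : X ∈ M := by
  rcases hX with hX | ⟨a, ha, rfl⟩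
  · exact hX
  · obtain ⟨_, rfl, hxA⟩ := hXA
    exact absurd hxA (disjoint_left.1 hWA ha)

end Set

namespace SimpleGraph

open Set

variable {V : Type*} {G : SimpleGraph V}

def ReachIn (G : SimpleGraph V) (A : Set V) (a b : V) : Prop :=
  ∃ p : G.Walk a b, ∀ x ∈ p.support, x ∈ A

namespace ReachIn

variable {A B : Set V} {a b c : V}

lemma refl (ha : a ∈ A) : G.ReachIn A a a := ⟨.nil, by simpa⟩

lemma left_mem : G.ReachIn A a b → a ∈ A
  | ⟨p, hp⟩ => hp a p.start_mem_support

lemma right_mem : G.ReachIn A a b → b ∈ A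
  | ⟨p, hp⟩ => hp b p.end_mem_support

lemma symm : G.ReachIn A a b → G.ReachIn A b a
  | ⟨p, hp⟩ => ⟨p.reverse, by simpa using hp⟩

lemma trans : G.ReachIn A a b → G.ReachIn A b c → G.ReachIn A a c
  | ⟨p, hp⟩, ⟨q, hq⟩ => ⟨p.append q, by
      intro x hx
      rcases (Walk.mem_support_append_iff p q).1 hx with hx | hx
      exacts [hp x hx, hq x hx]⟩

lemma mono (hAB : A ⊆ B) : G.ReachIn A a b → G.ReachIn B a b
  | ⟨p, hp⟩ => ⟨p, fun x hx => hAB (hp x hx)⟩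

lemma of_adj (h : G.Adj a b) (ha : a ∈ A) (hb : b ∈ A) : G.ReachIn A a b :=
  ⟨h.toWalk, by simp [ha, hb]⟩

lemma of_mem_support [DecidableEq V] (p : G.Walk a b) (hp : ∀ x ∈ p.support, x ∈ A)
    (hc : c ∈ p.support) : G.ReachIn A a c :=
  ⟨p.takeUntil c hc, fun x hx => hp x (p.support_takeUntil_subset_support hc hx)⟩

lemma avoid_or_through (h : G.ReachIn A a b) (c : V) :
    G.ReachIn (A \ {c}) a b ∨ (G.ReachIn A a c ∧ G.ReachIn A c b) := by
  classical
  obtain ⟨p, hp⟩ := h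
  by_cases hc : c ∈ p.support
  · refine .inr ⟨of_mem_support p hp hc, (of_mem_support p.reverse ?_ ?_).symm⟩ <;> simpa
  · exact .inl ⟨p, fun x hx => ⟨hp x hx, by rintro rfl; exact hc hx⟩⟩

lemma exists_adj_of_ne (hac : a ≠ c) (h : G.ReachIn A a c) :
    ∃ u, G.Adj c u ∧ G.ReachIn (A \ {c}) a u := by
  obtain ⟨p, hp⟩ := h
  induction p with
  | nil => exact absurd rfl hac
  | @cons a b c hab q ih =>
    have ha : a ∈ A \ {c} := ⟨hp a (by simp), hac⟩
    by_cases hbc : b = c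
    · subst hbc
      exact ⟨a, hab.symm, refl ha⟩
    · obtain ⟨u, hcu, hbu⟩ := ih hbc fun x hx => hp x (by simp [hx])
      exact ⟨u, hcu, (of_adj hab ha ⟨hp b (by simp), hbc⟩).trans hbu⟩

lemma reachable_induce (h : G.ReachIn A a b) :
    (G.induce A).Reachable ⟨a, h.left_mem⟩ ⟨b, h.right_mem⟩ :=
  let ⟨p, hp⟩ := h
  (p.induce A hp).reachable

end ReachIn

lemma Reachable.reachIn {A : Set V} {x y : A} (h : (G.induce A).Reachable x y) :
    G.ReachIn A x y :=
  let ⟨p⟩ := h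
  ⟨p.map (Embedding.induce A).toHom, fun z hz => by
    obtain ⟨w, -, rfl⟩ := List.mem_map.1 ((Walk.support_map _ p) ▸ hz)
    exact w.2⟩

def LinkedIn (G : SimpleGraph V) (A X Y : Set V) : Prop :=
  ∃ x ∈ X, ∃ y ∈ Y, G.ReachIn A x y

namespace LinkedIn

variable {A B X Y : Set V} {c : V}

lemma mono (hAB : A ⊆ B) : G.LinkedIn A X Y → G.LinkedIn B X Y
  | ⟨x, hx, y, hy, h⟩ => ⟨x, hx, y, hy, h.mono hAB⟩

lemma symm : G.LinkedIn A X Y → G.LinkedIn A Y X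
  | ⟨x, hx, y, hy, h⟩ => ⟨y, hy, x, hx, h.symm⟩

lemma trans_singleton : G.LinkedIn A X {c} → G.LinkedIn A {c} Y → G.LinkedIn A X Y
  | ⟨x, hx, _, rfl, h⟩, ⟨_, rfl, y, hy, h'⟩ => ⟨x, hx, y, hy, h.trans h'⟩

lemma left_nonempty : G.LinkedIn A X Y → (X ∩ A).Nonempty
  | ⟨x, hx, _, _, h⟩ => ⟨x, hx, h.left_mem⟩

lemma right_nonempty (h : G.LinkedIn A X Y) : (Y ∩ A).Nonempty :=
  h.symm.left_nonempty

end LinkedIn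

def IsComponentIn (G : SimpleGraph V) (A D : Set V) : Prop :=
  ∃ d ∈ A, D = {x | G.ReachIn A d x}

namespace IsComponentIn

variable {A C D D' S : Set V} {a b v : V}

lemma of_mem (ha : a ∈ A) : G.IsComponentIn A {x | G.ReachIn A a x} :=
  ⟨a, ha, rfl⟩

lemma subset (hD : G.IsComponentIn A D) : D ⊆ A := by
  obtain ⟨d, -, rfl⟩ := hD
  exact fun x hx => ReachIn.right_mem hx

lemma eq_setOf (hD : G.IsComponentIn A D) (ha : a ∈ D) : D = {x | G.ReachIn A a x} := by
  obtain ⟨d, -, rfl⟩ := hD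
  ext x
  exact ⟨fun hx => ReachIn.trans (ReachIn.symm ha) hx, fun hx => ReachIn.trans ha hx⟩

lemma eq_of_mem (hD : G.IsComponentIn A D) (hD' : G.IsComponentIn A D') (ha : a ∈ D)
    (ha' : a ∈ D') : D = D' := by
  rw [hD.eq_setOf ha, hD'.eq_setOf ha']

lemma pairwiseDisjoint : {D | G.IsComponentIn A D}.PairwiseDisjoint id :=
  fun _ hD _ hD' hne => Set.disjoint_left.2 fun _ ha ha' => hne (eq_of_mem hD hD' ha ha')

lemma mem_of_reachIn (hD : G.IsComponentIn A D) (ha : a ∈ D) (h : G.ReachIn A a b) : b ∈ D := by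
  rw [hD.eq_setOf ha]
  exact h

lemma reachIn_sdiff (hD : G.IsComponentIn A D) (ha : a ∈ D) (h : G.ReachIn (A \ S) a b) :
    G.ReachIn (D \ S) a b := by
  classical
  obtain ⟨p, hp⟩ := h
  exact ⟨p, fun x hx => ⟨hD.mem_of_reachIn ha
    ((ReachIn.of_mem_support p hp hx).mono Set.sdiff_subset), (hp x hx).2⟩⟩

lemma reachIn_of_mem (hD : G.IsComponentIn A D) (ha : a ∈ D) (hb : b ∈ D) : G.ReachIn D a b := by
  classical
  obtain ⟨p, hp⟩ : G.ReachIn A a b := by rwa [hD.eq_setOf ha] at hb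
  exact ⟨p, fun x hx => hD.mem_of_reachIn ha (ReachIn.of_mem_support p hp hx)⟩

lemma exists_adj (hC : ∀ a ∈ C, G.ReachIn C a v) (hD : G.IsComponentIn (C \ {v}) D) :
    ∃ u ∈ D, G.Adj v u := by
  obtain ⟨d, hd, rfl⟩ := hD
  obtain ⟨u, hvu, hdu⟩ := ReachIn.exists_adj_of_ne hd.2 (hC d hd.1)
  exact ⟨u, hdu, hvu⟩

end IsComponentIn

def Descends (G : SimpleGraph V) (q p : V × Set V) : Prop :=
  G.Adj p.1 q.1 ∧ q.1 ∈ q.2 ∧ q.2 ⊆ p.2 \ {p.1}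

/-- Along a descending chain the sets shrink and each has lost all earlier vertices, so the
vertices form a ray. -/
lemma wellFounded_descends (h : ¬HasRay G) : WellFounded G.Descends := by
  rw [wellFounded_iff_isEmpty_descending_chain]
  refine ⟨fun ⟨f, hf⟩ => h ⟨fun n => (f n).1, ?_, fun n => (hf n).1⟩⟩
  have hanti : Antitone fun n => (f n).2 :=
    antitone_nat_of_succ_le fun n => (hf n).2.2.trans Set.sdiff_subset
  refine Function.Injective.of_lt_imp_ne fun m n hmn => ?_
  obtain ⟨n, rfl⟩ : ∃ j, n = j + 1 := ⟨n - 1, by omega⟩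
  have hmem : (f (n + 1)).1 ∈ (f m).2 \ {(f m).1} :=
    (hf m).2.2 (hanti (by omega : m + 1 ≤ n + 1) (hf n).2.1)
  exact fun heq => hmem.2 heq.symm

def Faithful (G : SimpleGraph V) (k : ℕ) (C W : Set V) (M : Set (Set V)) : Prop :=
  ∀ S ⊆ W, S.Finite → S.ncard < k → ∀ X ∈ M.withSingletons W, ∀ Y ∈ M.withSingletons W,
    G.LinkedIn (C \ S) X Y → G.LinkedIn (W \ S) X Y

section Faithful

variable {k : ℕ} {C D W S X Y : Set V} {M : Set (Set V)}

lemma Faithful.linkedIn (hW : G.Faithful k C W M) (hk : 0 < k) (hX : X ∈ M) (hY : Y ∈ M)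
    (h : G.LinkedIn C X Y) : G.LinkedIn W X Y := by
  simpa using hW ∅ (empty_subset W) finite_empty (by simpa) X (.inl hX) Y (.inl hY)
    (by simpa using h)

lemma Faithful.linkedIn_sdiff_of_inter (hW : G.Faithful k D (W ∩ D) M) (hSW : S ⊆ W)
    (hS : S.Finite) (hSk : S.ncard < k) (hX : X ∈ M.withSingletons W)
    (hY : Y ∈ M.withSingletons W) (h : G.LinkedIn (D \ S) X Y) : G.LinkedIn (W \ S) X Y := by
  have hmarks : M.withSingletons (W ∩ (D \ S)) ⊆ M.withSingletons (W ∩ D) :=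
    withSingletons_mono subset_rfl (inter_subset_inter_right W sdiff_subset)
  have hSD : (S ∩ D).ncard < k := (ncard_le_ncard inter_subset_left hS).trans_lt hSk
  refine (hW (S ∩ D) (inter_subset_inter_left D hSW) (hS.inter_of_left D) hSD X
    (hmarks (mem_withSingletons_inter hX h.left_nonempty)) Y
    (hmarks (mem_withSingletons_inter hY h.right_nonempty))
    (by rwa [sdiff_inter_self_eq_sdiff])).mono ?_
  exact fun x hx => ⟨hx.1.1, fun hxS => hx.2 ⟨hxS, hx.1.2⟩⟩

lemma linkedIn_sdiff_of_pairwiseDisjoint {ℰ : Set (Set V)} (hℰ : ℰ.PairwiseDisjoint id)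
    (hℰk : ℰ.ncard = k) (hlink : ∀ D ∈ ℰ, G.LinkedIn (W ∩ D) X Y) (hS : S.Finite)
    (hSk : S.ncard < k) : G.LinkedIn (W \ S) X Y := by
  obtain ⟨D, hD, hSD⟩ := exists_disjoint_of_ncard_lt hℰ hS (hℰk ▸ hSk)
  exact (hlink D hD).mono fun x hx => ⟨hx.1, fun hxS => Set.disjoint_left.1 hSD hxS hx.2⟩

end Faithful

section Step

variable {k : ℕ} {C W : Set V} {M : Set (Set V)} {v : V}

/-- A path of `C - S` either avoids `v`, and then runs inside one component of `C - v`, or it passes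
through `v`, and then it reaches `v` from `X` through a neighbour of `v`, which is a mark for the
components. -/
lemma faithful_of_components (hvW : v ∈ W)
    (hcomp : ∀ D, G.IsComponentIn (C \ {v}) D →
      G.Faithful k D (W ∩ D) (insert (G.neighborSet v) M) ∨
      (Disjoint W D ∧ ∀ S ⊆ W, S.Finite → S.ncard < k → ∀ X ∈ insert (G.neighborSet v) M,
        ∀ Y ∈ insert (G.neighborSet v) M, G.LinkedIn D X Y → G.LinkedIn (W \ S) X Y)) :
    G.Faithful k C W M := by
  intro S hSW hS hSk
  set M' := insert (G.neighborSet v) M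
  have avoid : ∀ X ∈ M'.withSingletons W, ∀ Y ∈ M'.withSingletons W,
      G.LinkedIn ((C \ {v}) \ S) X Y → G.LinkedIn (W \ S) X Y := by
    rintro X hX Y hY ⟨x, hx, y, hy, hxy⟩
    have hxC : x ∈ C \ {v} := hxy.left_mem.1
    have hlink : G.LinkedIn ({z | G.ReachIn (C \ {v}) x z} \ S) X Y :=
      ⟨x, hx, y, hy, (IsComponentIn.of_mem hxC).reachIn_sdiff (ReachIn.refl hxC) hxy⟩
    rcases hcomp _ (.of_mem hxC) with hfaith | ⟨hdisj, hlinks⟩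
    · exact hfaith.linkedIn_sdiff_of_inter hSW hS hSk hX hY hlink
    · have hdisj' : Disjoint W (_ \ S) := hdisj.mono_right sdiff_subset
      exact hlinks S hSW hS hSk X (mem_of_mem_withSingletons hX hlink.left_nonempty hdisj')
        Y (mem_of_mem_withSingletons hY hlink.right_nonempty hdisj') (hlink.mono sdiff_subset)
  have through : ∀ X ∈ M'.withSingletons W, ∀ x ∈ X, G.ReachIn (C \ S) x v →
      G.LinkedIn (W \ S) X {v} := by
    intro X hX x hx hxv
    have hv : v ∈ W \ S := ⟨hvW, hxv.right_mem.2⟩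
    by_cases hxv' : x = v
    · rw [hxv'] at hx
      exact ⟨v, hx, v, rfl, .refl hv⟩
    obtain ⟨u, hvu, hxu⟩ := hxv.exists_adj_of_ne hxv'
    obtain ⟨x', hx', u', hvu', hxu'⟩ := avoid X hX _ (.inl (mem_insert _ _))
      ⟨x, hx, u, hvu, by rwa [Set.sdiff_sdiff_comm]⟩
    exact ⟨x', hx', v, rfl, hxu'.trans (.of_adj hvu'.symm hxu'.right_mem hv)⟩
  rintro X hX Y hY ⟨x, hx, y, hy, hxy⟩
  have hM' : M.withSingletons W ⊆ M'.withSingletons W :=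
    withSingletons_mono (subset_insert _ _) subset_rfl
  rcases hxy.avoid_or_through v with hxy | ⟨hxv, hvy⟩
  · exact avoid X (hM' hX) Y (hM' hY) ⟨x, hx, y, hy, by rwa [Set.sdiff_sdiff_comm]⟩
  · exact (through X (hM' hX) x hx hxv).trans_singleton (through Y (hM' hY) y hy hvy.symm).symm

lemma IsComponentIn.mem_of_mem_insert_biUnion {A D : Set V} {𝒟 : Set (Set V)}
    {WD : Set V → Set V} {x : V} (h𝒟 : ∀ D' ∈ 𝒟, G.IsComponentIn A D')
    (hWD : ∀ D' ∈ 𝒟, WD D' ⊆ D') (hD : G.IsComponentIn A D) (hvD : v ∉ D)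
    (hx : x ∈ insert v (⋃ D' ∈ 𝒟, WD D')) (hxD : x ∈ D) : D ∈ 𝒟 ∧ x ∈ WD D := by
  obtain rfl | hx := hx
  · exact absurd hxD hvD
  obtain ⟨D', hD', hxD'⟩ := mem_iUnion₂.1 hx
  obtain rfl := (h𝒟 D' hD').eq_of_mem hD (hWD D' hD' hxD') hxD
  exact ⟨hD', hxD'⟩

lemma exists_finite_saturating_components {A U : Set V} (hM : M.Finite) (hU : U.Finite) :
    ∃ 𝒟 : Set (Set V), 𝒟.Finite ∧ (∀ D ∈ 𝒟, G.IsComponentIn A D) ∧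
      (∀ u ∈ U ∩ A, {x | G.ReachIn A u x} ∈ 𝒟) ∧
      ∀ X ∈ M, ∀ Y ∈ M, ∀ D, G.IsComponentIn A D → G.LinkedIn D X Y →
        D ∈ 𝒟 ∨ ∃ ℰ ⊆ 𝒟, ℰ.ncard = k ∧ ∀ E ∈ ℰ, G.LinkedIn E X Y := by
  obtain ⟨𝒟₀, h𝒟₀, h𝒟₀fin, hsat⟩ := exists_finite_saturating (hM.prod hM)
    (fun XY => {D | G.IsComponentIn A D ∧ G.LinkedIn D XY.1 XY.2}) k
  refine ⟨𝒟₀ ∪ (fun u => {x | G.ReachIn A u x}) '' (U ∩ A),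
    h𝒟₀fin.union ((hU.inter_of_left A).image _), ?_, fun u hu => .inr ⟨u, hu, rfl⟩,
    fun X hX Y hY D hD hXY => ?_⟩
  · rintro D (hD | ⟨u, hu, rfl⟩)
    · obtain ⟨_, -, hD⟩ := mem_iUnion₂.1 (h𝒟₀ hD)
      exact hD.1
    · exact .of_mem hu.2
  rcases hsat (X, Y) ⟨hX, hY⟩ with hall | ⟨ℰ, hℰ, hℰk⟩
  · exact .inl (.inl (hall ⟨hD, hXY⟩))
  · exact .inr ⟨ℰ, fun E hE => .inl (hℰ hE).2, hℰk, fun E hE => (hℰ hE).1.2⟩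

lemma exists_faithful_of_components {U : Set V} (hv : v ∈ C) (hM : M.Finite) (hU : U.Finite)
    (hUC : U ⊆ C) (IH : ∀ D, G.IsComponentIn (C \ {v}) D → ∀ U' ⊆ D, U'.Finite →
      ∃ W ⊆ D, W.Finite ∧ U' ⊆ W ∧ G.Faithful k D W (insert (G.neighborSet v) M)) :
    ∃ W ⊆ C, W.Finite ∧ U ⊆ W ∧ G.Faithful k C W M := by
  obtain ⟨𝒟, h𝒟fin, h𝒟, hU𝒟, hsat⟩ :=
    exists_finite_saturating_components (G := G) (A := C \ {v}) (k := k) (hM.insert _) hU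
  choose! WD hWD_sub hWD using fun D hD => IH D hD (U ∩ D) inter_subset_right (hU.inter_of_left D)
  replace hWD_sub : ∀ D ∈ 𝒟, WD D ⊆ D := fun D hD => hWD_sub D (h𝒟 D hD)
  set W := insert v (⋃ D ∈ 𝒟, WD D)
  have hWD_W : ∀ D ∈ 𝒟, WD D ⊆ W := fun D hD => (subset_biUnion_of_mem hD).trans (subset_insert _ _)
  have hinter : ∀ D, G.IsComponentIn (C \ {v}) D → ∀ x ∈ W ∩ D, D ∈ 𝒟 ∧ x ∈ WD D :=
    fun D hD x hx => hD.mem_of_mem_insert_biUnion h𝒟 hWD_sub (fun hvD => (hD.subset hvD).2 rfl)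
      hx.1 hx.2
  have hW_eq : ∀ D ∈ 𝒟, W ∩ D = WD D := fun D hD => Subset.antisymm
    (fun x hx => (hinter D (h𝒟 D hD) x hx).2) (subset_inter (hWD_W D hD) (hWD_sub D hD))
  refine ⟨W, insert_subset hv (iUnion₂_subset fun D hD => (hWD_sub D hD).trans
      ((h𝒟 D hD).subset.trans sdiff_subset)),
    (h𝒟fin.biUnion fun D hD => (hWD D (h𝒟 D hD)).1).insert v,
    fun u hu => ?_, faithful_of_components (mem_insert v _) fun D hD => ?_⟩
  · by_cases huv : u = v
    · exact huv ▸ mem_insert v _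
    have hu' : u ∈ C \ {v} := ⟨hUC hu, huv⟩
    have hD𝒟 := hU𝒟 u ⟨hu, hu'⟩
    exact hWD_W _ hD𝒟 ((hWD _ (h𝒟 _ hD𝒟)).2.1 ⟨hu, ReachIn.refl hu'⟩)
  by_cases hD𝒟 : D ∈ 𝒟
  · exact .inl (hW_eq D hD𝒟 ▸ (hWD D hD).2.2)
  refine .inr ⟨Set.disjoint_left.2 fun {x} hxW hxD => hD𝒟 (hinter D hD x ⟨hxW, hxD⟩).1,
    fun S _ hS hSk X hX Y hY hXY => ?_⟩
  obtain hD𝒟' | ⟨ℰ, hℰ𝒟, hℰk, hℰ⟩ := hsat X hX Y hY D hD hXY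
  · exact absurd hD𝒟' hD𝒟
  refine linkedIn_sdiff_of_pairwiseDisjoint
    (IsComponentIn.pairwiseDisjoint.subset fun E hE => h𝒟 E (hℰ𝒟 hE)) hℰk (fun E hE => ?_) hS hSk
  rw [hW_eq E (hℰ𝒟 hE)]
  exact (hWD E (h𝒟 E (hℰ𝒟 hE))).2.2.linkedIn (by omega) hX hY (hℰ E hE)

end Step

theorem exists_finite_faithful (hwf : WellFounded G.Descends) (k : ℕ) (p : V × Set V)
    (hp : p.1 ∈ p.2) (hconn : ∀ a ∈ p.2, G.ReachIn p.2 a p.1) (M : Set (Set V)) (hM : M.Finite)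
    (U : Set V) (hU : U.Finite) (hUC : U ⊆ p.2) :
    ∃ W ⊆ p.2, W.Finite ∧ U ⊆ W ∧ G.Faithful k p.2 W M := by
  induction p using hwf.induction generalizing M U with
  | h p IH =>
    refine exists_faithful_of_components hp hM hU hUC fun D hD U' hU'D hU' => ?_
    obtain ⟨u, huD, hvu⟩ := hD.exists_adj hconn
    exact IH (u, D) ⟨hvu, huD, hD.subset⟩ huD (fun a ha => hD.reachIn_of_mem ha huD) _
      (hM.insert _) U' hU' hU'D

lemma exists_finite_faithful_univ {k : ℕ} (hray : ¬HasRay G) (hconn : KConnected G k)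
    {U : Set V} (hU : U.Finite) : ∃ W : Set V, W.Finite ∧ U ⊆ W ∧ G.Faithful k univ W ∅ := by
  rcases k.eq_zero_or_pos with rfl | hk
  · exact ⟨U, hU, subset_rfl, fun S _ _ hS => absurd hS (Nat.not_lt_zero _)⟩
  have hG : (G.induce (∅ : Set V)ᶜ).Connected := hconn.2 ∅ finite_empty (by simpa)
  obtain ⟨⟨v, -⟩⟩ := hG.nonempty
  have hreach : ∀ a ∈ (univ : Set V), G.ReachIn univ a v := fun a _ =>
    ((hG.preconnected ⟨a, not_false⟩ ⟨v, not_false⟩).reachIn).mono (subset_univ _)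
  obtain ⟨W, -, hW, hUW, hWU⟩ := exists_finite_faithful (wellFounded_descends hray) k (v, univ)
    (mem_univ v) hreach ∅ finite_empty U hU (subset_univ U)
  exact ⟨W, hW, hUW, hWU⟩

lemma reachable_induce_induce {W : Set V} {s : Set W} {x y : ↥sᶜ}
    (h : G.ReachIn (W \ Subtype.val '' s) x y) : ((G.induce W).induce sᶜ).Reachable x y :=
  let f : G.induce (W \ Subtype.val '' s) →g (G.induce W).induce sᶜ :=
    { toFun := fun z => ⟨⟨z, z.2.1⟩, fun hz => z.2.2 ⟨_, hz, rfl⟩⟩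
      map_rel' := id }
  h.reachable_induce.map f

lemma kConnected_induce_of_faithful {k : ℕ} {W : Set V} (hconn : KConnected G k)
    (hW : G.Faithful k univ W ∅) (hkW : k < W.ncard) : KConnected (G.induce W) k := by
  refine ⟨.inl (by rwa [Nat.card_coe_set_eq]), fun s hs hsk => ?_⟩
  set S : Set V := Subtype.val '' s
  have hSk : S.ncard < k := by rwa [ncard_image_of_injective _ Subtype.val_injective]
  have hnotS : ∀ x : ↥sᶜ, (x : V) ∉ S := fun x ⟨z, hz, hzx⟩ =>
    x.2 (Subtype.val_injective hzx ▸ hz)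
  have hGS := (hconn.2 S (hs.image _) hSk).preconnected
  rw [connected_iff]
  refine ⟨fun x y => reachable_induce_induce ?_, ?_⟩
  · obtain ⟨_, rfl, _, rfl, hxy⟩ := hW S (image_subset_iff.2 fun x _ => x.2) (hs.image _) hSk
      {(x : V)} (.inr ⟨x, x.1.2, rfl⟩) {(y : V)} (.inr ⟨y, y.1.2, rfl⟩)
      ⟨x, rfl, y, rfl, compl_eq_univ_sdiff S ▸ (hGS ⟨x, hnotS x⟩ ⟨y, hnotS y⟩).reachIn⟩
    exact hxy
  · obtain ⟨z, hzW, hzS⟩ : (W \ S).Nonempty := nonempty_iff_ne_empty.2 fun h => by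
      have := ncard_le_ncard (sdiff_eq_empty.1 h) (hs.image _)
      omega
    exact ⟨⟨⟨z, hzW⟩, fun hz => hzS ⟨_, hz, rfl⟩⟩⟩

end SimpleGraph

theorem stmt_15_general {V : Type} (G : SimpleGraph V) (k : ℕ)
    (hrayless : ¬ HasRay G) (hconn : KConnected G k)
    (U : Set V) (hU : U.Finite) :
    ∃ H : G.Subgraph, H.verts.Finite ∧ U ⊆ H.verts ∧ KConnected H.coe k := by
  obtain ⟨T, hT, hTk⟩ := Set.exists_finite_ncard_eq (hconn.1.imp_left Nat.succ_le_of_lt)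
  obtain ⟨W, hW, hUW, hWfaith⟩ := exists_finite_faithful_univ hrayless hconn (hU.union hT)
  refine ⟨(⊤ : G.Subgraph).induce W, hW, Set.subset_union_left.trans hUW, ?_⟩
  rw [← induce_eq_coe_induce_top]
  refine kConnected_induce_of_faithful hconn hWfaith ?_
  have := Set.ncard_le_ncard (Set.subset_union_right.trans hUW) hW
  omega

/-- Halin's lemma: a rayless `k`-connected countable graph contains, around any finite
vertex set `U`, a finite `k`-connected subgraph. -/
theorem stmt_15 {V : Type} [Countable V] (G : SimpleGraph V) (k : ℕ)
    (hrayless : ¬ HasRay G) (hconn : KConnected G k)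
    (U : Set V) (hU : U.Finite) :
    ∃ H : G.Subgraph, H.verts.Finite ∧ U ⊆ H.verts ∧ KConnected H.coe k :=
  stmt_15_general G k hrayless hconn U hU
end

section
/- Let (T, 𝒱) be a tree-decomposition of a graph G of adhesion at most 2 such that for every edge vw contained in the torso of a part V_t but not in G, there is a v–w path in G with no inner vertices in V_t. Then for every t ∈ V(T), the torso of V_t is a minor of G. -/
open SimpleGraph

/-- The torso of the part `𝒱 t`: the induced subgraph `G[𝒱 t]` together with additional
edges making every adhesion set contained in `𝒱 t` complete. -/
def torso {V T : Type*} (G : SimpleGraph V) (Tr : SimpleGraph T) (𝒱 : T → Set V)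
    (t : T) : SimpleGraph (𝒱 t) :=
  SimpleGraph.fromRel (fun a b =>
    G.Adj a b ∨ ∃ u u' : T, Tr.Adj u u' ∧ 𝒱 u ∩ 𝒱 u' ⊆ 𝒱 t ∧
      (a : V) ∈ 𝒱 u ∩ 𝒱 u' ∧ (b : V) ∈ 𝒱 u ∩ 𝒱 u')

/-!
Fix a well-order of `V`. For every torso edge `ab` of `V t` missing from `G`, the inner vertices of
the given `a`–`b` path go to the branch set of the smaller endpoint; these branch sets are
connected and realise every torso edge. For disjointness, let `x ∉ V t`: all parts containing
`x` lie on the far side of one edge `tt'` of the tree, so any walk from `x` that first meets `V t`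
in `a` crosses the separator `V t ∩ V t'` exactly at `a`. Hence `x` attaches to at most two
vertices of `V t`, so two paths through `x` join the same pair and only one of them is used.
-/

namespace SimpleGraph

variable {V : Type*} {G : SimpleGraph V}

theorem IsAcyclic.not_reachable_deleteEdges (hG : G.IsAcyclic) {u v : V} (h : G.Adj u v) :
    ¬ (G.deleteEdges {s(u, v)}).Reachable u v :=
  isBridge_iff.mp (isAcyclic_iff_forall_adj_isBridge.mp hG h)

theorem Connected.reachable_deleteEdges_or (hG : G.Connected) (u v w : V) :
    (G.deleteEdges {s(u, v)}).Reachable u w ∨ (G.deleteEdges {s(u, v)}).Reachable v w := by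
  set G' := G.deleteEdges {s(u, v)}
  suffices h : ∀ {x : V} (_ : G.Walk x w), G'.Reachable u x ∨ G'.Reachable v x →
      G'.Reachable u w ∨ G'.Reachable v w from
    h (hG.preconnected u w).some (Or.inl .rfl)
  intro x p
  induction p with
  | nil => exact id
  | @cons x y _ hxy _ ih =>
    refine fun hx => ih ?_
    by_cases he : s(x, y) = s(u, v)
    · rcases Sym2.eq_iff.mp he with ⟨-, rfl⟩ | ⟨-, rfl⟩
      exacts [Or.inr .rfl, Or.inl .rfl]
    · have hxy' : G'.Adj x y := by simpa [G', he] using hxy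
      exact hx.imp (·.trans hxy'.reachable) (·.trans hxy'.reachable)

theorem Reachable.exists_adj_reachable_deleteEdges {u v : V} (h : G.Reachable u v) (hne : u ≠ v) :
    ∃ w, G.Adj u w ∧ (G.deleteEdges {s(u, w)}).Reachable w v := by
  classical
  set p := h.some.bypass
  have hp : p.IsPath := h.some.bypass_isPath
  have hnil : ¬ p.Nil := Walk.not_nil_of_ne hne
  rw [← p.cons_tail_eq hnil, Walk.cons_isPath_iff] at hp
  refine ⟨p.snd, p.adj_snd hnil, ⟨p.tail.toDeleteEdges _ fun e he he' => ?_⟩⟩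
  rw [Set.mem_singleton_iff] at he'
  subst he'
  exact hp.2 (p.tail.fst_mem_support_of_mem_edges he)

end SimpleGraph

def SimpleGraph.attachments {V : Type*} (G : SimpleGraph V) (S : Set V) (x : V) : Set V :=
  {a | a ∈ S ∧ ∃ W : G.Walk x a, ∀ y ∈ W.support, y ≠ a → y ∉ S}

namespace IsTreeDecomp

variable {V T : Type*} {G : SimpleGraph V} {Tr : SimpleGraph T} {𝒱 : T → Set V}

theorem inter_subset_of_reachable_deleteEdges (htd : IsTreeDecomp G Tr 𝒱) {t t' z z' : T}
    (ha : Tr.Adj t t') (hz : (Tr.deleteEdges {s(t, t')}).Reachable t z)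
    (hz' : (Tr.deleteEdges {s(t, t')}).Reachable t' z') : 𝒱 z ∩ 𝒱 z' ⊆ 𝒱 t ∩ 𝒱 t' := by
  classical
  obtain ⟨p⟩ := htd.tree.connected.preconnected z z'
  have hsep : ¬ (Tr.deleteEdges {s(t, t')}).Reachable z z' := fun h =>
    htd.tree.isAcyclic.not_reachable_deleteEdges ha (hz.trans (h.trans hz'.symm))
  have he := p.bypass.mem_edges_of_not_reachable_deleteEdges hsep
  exact Set.subset_inter (htd.sep _ p.bypass_isPath _ (p.bypass.fst_mem_support_of_mem_edges he))
    (htd.sep _ p.bypass_isPath _ (p.bypass.snd_mem_support_of_mem_edges he))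

theorem exists_adj_forall_mem_reachable (htd : IsTreeDecomp G Tr 𝒱) {t : T} {x : V}
    (hx : x ∉ 𝒱 t) :
    ∃ t', Tr.Adj t t' ∧ ∀ z, x ∈ 𝒱 z → (Tr.deleteEdges {s(t, t')}).Reachable t' z := by
  obtain ⟨z₀, hz₀⟩ := htd.coverV x
  obtain ⟨t', ha, hz₀'⟩ := (htd.tree.connected.preconnected t z₀).exists_adj_reachable_deleteEdges
    (by rintro rfl; exact hx hz₀)
  refine ⟨t', ha, fun z hz => ?_⟩
  refine (htd.tree.connected.reachable_deleteEdges_or t t' z).resolve_left fun hz' => hx ?_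
  exact (htd.inter_subset_of_reachable_deleteEdges ha hz' hz₀' ⟨hz, hz₀⟩).1

theorem mem_inter_of_mem_attachments (htd : IsTreeDecomp G Tr 𝒱) {t t' : T} (ha : Tr.Adj t t')
    {x a : V} (hx : ∀ z, x ∈ 𝒱 z → (Tr.deleteEdges {s(t, t')}).Reachable t' z)
    (hxa : a ∈ G.attachments (𝒱 t) x) : a ∈ 𝒱 t ∩ 𝒱 t' := by
  obtain ⟨haV, W, hW⟩ := hxa
  induction W with
  | nil => exact absurd (hx t haV).symm (htd.tree.isAcyclic.not_reachable_deleteEdges ha)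
  | @cons u v a huv q ih =>
    by_cases hv : ∀ z, v ∈ 𝒱 z → (Tr.deleteEdges {s(t, t')}).Reachable t' z
    · exact ih hv haV fun y hy => hW y (List.mem_cons_of_mem _ hy)
    push Not at hv
    obtain ⟨z', hvz', hz'⟩ := hv
    obtain ⟨z, huz, hvz⟩ := htd.coverE huv
    have hvt : v ∈ 𝒱 t ∩ 𝒱 t' := htd.inter_subset_of_reachable_deleteEdges ha
      ((htd.tree.connected.reachable_deleteEdges_or t t' z').resolve_right hz') (hx z huz)
      ⟨hvz', hvz⟩
    obtain rfl : v = a := by_contra fun hva => hW v (by simp) hva hvt.1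
    exact hvt

theorem encard_attachments_le (htd : IsTreeDecomp G Tr 𝒱) {k : ℕ∞}
    (hadh : ∀ ⦃u u' : T⦄, Tr.Adj u u' → (𝒱 u ∩ 𝒱 u').encard ≤ k) {t : T} {x : V}
    (hx : x ∉ 𝒱 t) : (G.attachments (𝒱 t) x).encard ≤ k := by
  obtain ⟨t', ha, hside⟩ := htd.exists_adj_forall_mem_reachable hx
  exact (Set.encard_le_encard fun a => htd.mem_inter_of_mem_attachments ha hside).trans (hadh ha)

end IsTreeDecomp

theorem Set.eq_or_eq_of_encard_le_two {α : Type*} {s : Set α} {a b c : α} (hs : s.encard ≤ 2)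
    (hab : a ≠ b) (ha : a ∈ s) (hb : b ∈ s) (hc : c ∈ s) : c = a ∨ c = b := by
  have hpair : ({a, b} : Set α) = s := (Set.toFinite _).eq_of_subset_of_encard_le
    (Set.pair_subset ha hb) (by rwa [Set.encard_pair hab])
  simpa [← hpair] using hc

namespace SimpleGraph.Walk

variable {V : Type*} {G : SimpleGraph V} {u v x : V}

def innerVerts (p : G.Walk u v) : Set V := {x | x ∈ p.support ∧ x ≠ u ∧ x ≠ v}

theorem innerVerts_reverse (p : G.Walk u v) : p.reverse.innerVerts = p.innerVerts := by
  ext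
  simp only [innerVerts, support_reverse, List.mem_reverse, Set.mem_ofPred_eq]
  tauto

theorem penultimate_mem_innerVerts (p : G.Walk u v) (hne : u ≠ v) (huv : ¬ G.Adj u v) :
    p.penultimate ∈ p.innerVerts := by
  have hadj := p.adj_penultimate (not_nil_of_ne hne)
  exact ⟨p.getVert_mem_support _, fun h => huv (h ▸ hadj), hadj.ne⟩

theorem IsPath.mem_innerVerts_of_mem_support_takeUntil [DecidableEq V] {p : G.Walk u v}
    (hp : p.IsPath) (hx : x ∈ p.innerVerts) {y : V} (hy : y ∈ (p.takeUntil x hx.1).support)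
    (hyu : y ≠ u) : y ∈ p.innerVerts :=
  ⟨p.support_takeUntil_subset_support hx.1 hy, hyu,
    fun hyv => endpoint_notMem_support_takeUntil hp hx.1 hx.2.2.symm (hyv ▸ hy)⟩

theorem IsPath.start_mem_attachments {S : Set V} {p : G.Walk u v} (hp : p.IsPath)
    (hpS : ∀ y ∈ p.innerVerts, y ∉ S) (hu : u ∈ S) (hx : x ∈ p.innerVerts) :
    u ∈ G.attachments S x := by
  classical
  refine ⟨hu, (p.takeUntil x hx.1).reverse, fun y hy hyu => hpS y ?_⟩
  exact hp.mem_innerVerts_of_mem_support_takeUntil hx (by simpa using hy) hyu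

theorem IsPath.end_mem_attachments {S : Set V} {p : G.Walk u v} (hp : p.IsPath)
    (hpS : ∀ y ∈ p.innerVerts, y ∉ S) (hv : v ∈ S) (hx : x ∈ p.innerVerts) :
    v ∈ G.attachments S x := by
  rw [← innerVerts_reverse] at hpS hx
  exact hp.reverse.start_mem_attachments hpS hv hx

end SimpleGraph.Walk

section BranchSets

variable {V : Type*} [LinearOrder V] {G : SimpleGraph V} {S : Set V} {H : SimpleGraph S}
  (P : ∀ a b : S, H.Adj a b → ¬ G.Adj a b → G.Walk a b)

def branchSet (a : S) : Set V :=
  insert ↑a (⋃ (b : S) (h : H.Adj a b) (h' : ¬ G.Adj a b) (_ : (a : V) < b),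
    (P a b h h').innerVerts)

theorem self_mem_branchSet (a : S) : (a : V) ∈ branchSet P a :=
  Set.mem_insert _ _

theorem mem_branchSet_of_mem_innerVerts {a b : S} (h : H.Adj a b) (h' : ¬ G.Adj a b)
    (hab : (a : V) < b) {x : V} (hx : x ∈ (P a b h h').innerVerts) : x ∈ branchSet P a := by
  simp only [branchSet, Set.mem_insert_iff, Set.mem_iUnion]
  exact Or.inr ⟨b, h, h', hab, hx⟩

theorem connected_induce_branchSet (hP : ∀ a b h h', (P a b h h').IsPath) (a : S) :
    (G.induce (branchSet P a)).Connected := by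
  classical
  rw [connected_iff_exists_forall_reachable]
  refine ⟨⟨a, self_mem_branchSet P a⟩, ?_⟩
  rintro ⟨x, rfl | hx⟩
  · rfl
  simp only [Set.mem_iUnion] at hx
  obtain ⟨b, h, h', hab, hx⟩ := hx
  have hsub : ∀ y ∈ ((P a b h h').takeUntil x hx.1).support, y ∈ branchSet P a := by
    intro y hy
    rcases eq_or_ne y a with rfl | hya
    · exact self_mem_branchSet P a
    · exact mem_branchSet_of_mem_innerVerts P h h' hab
        ((hP a b h h').mem_innerVerts_of_mem_support_takeUntil hx hy hya)
  exact ⟨((P a b h h').takeUntil x hx.1).induce _ hsub⟩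

theorem exists_mem_attachments_of_mem_branchSet
    (hP : ∀ a b h h', (P a b h h').IsPath ∧ ∀ y ∈ (P a b h h').innerVerts, y ∉ S)
    {a : S} {x : V} (hx : x ∈ branchSet P a) (hxa : x ≠ a) :
    x ∉ S ∧ ∃ b : S, (a : V) < b ∧ ↑a ∈ G.attachments S x ∧ ↑b ∈ G.attachments S x := by
  simp only [branchSet, Set.mem_insert_iff, hxa, false_or, Set.mem_iUnion] at hx
  obtain ⟨b, h, h', hab, hx⟩ := hx
  obtain ⟨hp, hpS⟩ := hP a b h h'
  exact ⟨hpS x hx, b, hab, hp.start_mem_attachments hpS a.2 hx, hp.end_mem_attachments hpS b.2 hx⟩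

theorem pairwise_disjoint_branchSet
    (hP : ∀ a b h h', (P a b h h').IsPath ∧ ∀ y ∈ (P a b h h').innerVerts, y ∉ S)
    (hatt : ∀ x ∉ S, (G.attachments S x).encard ≤ 2) :
    Pairwise fun a a' => Disjoint (branchSet P a) (branchSet P a') := by
  intro a a' hne
  have hne : (a : V) ≠ a' := Subtype.coe_injective.ne hne
  rw [Set.disjoint_left]
  intro x hx hx'
  rcases eq_or_ne x a with rfl | hxa
  · exact (exists_mem_attachments_of_mem_branchSet P hP hx' hne).1 a.2
  rcases eq_or_ne x a' with rfl | hxa'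
  · exact (exists_mem_attachments_of_mem_branchSet P hP hx hne.symm).1 a'.2
  obtain ⟨hxS, b, hab, ha, hb⟩ := exists_mem_attachments_of_mem_branchSet P hP hx hxa
  obtain ⟨-, b', hab', ha', hb'⟩ := exists_mem_attachments_of_mem_branchSet P hP hx' hxa'
  have hpair {c : V} (hc : c ∈ G.attachments S x) : c = a ∨ c = b :=
    Set.eq_or_eq_of_encard_le_two (hatt x hxS) hab.ne ha hb hc
  rcases hpair ha' with h | h
  · exact hne h.symm
  rcases hpair hb' with h' | h'
  · exact lt_asymm hab (h ▸ h' ▸ hab')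
  · exact hab'.ne (h.trans h'.symm)

theorem exists_adj_of_branchSet {a b : S} (hab : H.Adj a b) :
    ∃ u ∈ branchSet P a, ∃ v ∈ branchSet P b, G.Adj u v := by
  wlog hlt : (a : V) < b generalizing a b
  · obtain ⟨u, hu, v, hv, huv⟩ :=
      this hab.symm ((not_lt.mp hlt).lt_of_ne (Subtype.coe_injective.ne hab.ne.symm))
    exact ⟨v, hv, u, hu, huv.symm⟩
  by_cases hG : G.Adj a b
  · exact ⟨a, self_mem_branchSet P a, b, self_mem_branchSet P b, hG⟩
  exact ⟨_, mem_branchSet_of_mem_innerVerts P hab hG hlt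
    ((P a b hab hG).penultimate_mem_innerVerts hlt.ne hG), b, self_mem_branchSet P b,
    (P a b hab hG).adj_penultimate (Walk.not_nil_of_ne hlt.ne)⟩

end BranchSets

theorem isMinorOf_of_forall_exists_path {V : Type*} {G : SimpleGraph V} {S : Set V}
    {H : SimpleGraph S}
    (hpaths : ∀ a b : S, H.Adj a b → ¬ G.Adj a b → ∃ p : G.Walk a b, p.IsPath ∧
      ∀ v ∈ p.support, v ≠ a → v ≠ b → v ∉ S)
    (hatt : ∀ x ∉ S, (G.attachments S x).encard ≤ 2) : IsMinorOf H G := by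
  choose P hP using hpaths
  let _ : LinearOrder V := IsWellOrder.linearOrder WellOrderingRel
  have hP' : ∀ a b h h', (P a b h h').IsPath ∧ ∀ y ∈ (P a b h h').innerVerts, y ∉ S :=
    fun a b h h' => ⟨(hP a b h h').1, fun y hy => (hP a b h h').2 y hy.1 hy.2.1 hy.2.2⟩
  exact ⟨branchSet P, fun a => ⟨a, self_mem_branchSet P a⟩,
    connected_induce_branchSet P fun a b h h' => (hP' a b h h').1,
    pairwise_disjoint_branchSet P hP' hatt, fun _ _ => exists_adj_of_branchSet P⟩

/-- If `(T, 𝒱)` is a tree-decomposition of `G` of adhesion at most 2 such that every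
torso edge `vw` missing from `G` is realised by a `v`–`w` path in `G` with no inner
vertex in `𝒱 t`, then every torso is a minor of `G`. -/
theorem stmt_19 {V T : Type} (G : SimpleGraph V) (Tr : SimpleGraph T) (𝒱 : T → Set V)
    (htd : IsTreeDecomp G Tr 𝒱)
    (hadh : ∀ ⦃u u' : T⦄, Tr.Adj u u' →
      (𝒱 u ∩ 𝒱 u').Finite ∧ (𝒱 u ∩ 𝒱 u').ncard ≤ 2)
    (hpaths : ∀ (t : T) (a b : 𝒱 t), (torso G Tr 𝒱 t).Adj a b → ¬ G.Adj a b →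
      ∃ p : G.Walk (a : V) (b : V), p.IsPath ∧
        ∀ v ∈ p.support, v ≠ (a : V) → v ≠ (b : V) → v ∉ 𝒱 t) :
    ∀ t : T, IsMinorOf (torso G Tr 𝒱 t) G := by
  have hadh' : ∀ ⦃u u' : T⦄, Tr.Adj u u' → (𝒱 u ∩ 𝒱 u').encard ≤ 2 := fun u u' h => by
    obtain ⟨hfin, hcard⟩ := hadh h
    rw [← hfin.cast_ncard_eq]
    exact_mod_cast hcard
  exact fun t => isMinorOf_of_forall_exists_path (hpaths t) fun x hx =>
    htd.encard_attachments_le hadh' hx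
end
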